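/- arXiv:2002.09184 — 11 statements merged into one kernel-verified Lean document; each statement's English description precedes it below -/
import Mathlib

section
/- Let 1 ≤ m ≤ k. A subset S ⊆ ℤ/nℤ of cardinality m is a face of the generalized Tonnetz Tonn^{n,k}(L) if and only if there exist x ∈ ℤ/nℤ and an ordered partition {1,…,k} = I_1 ⊔ I_2 ⊔ ⋯ ⊔ I_m into nonempty sets such that S = {x, x+μ(I_1), x+μ(I_1)+μ(I_2), …, x+μ(I_1)+⋯+μ(I_{m−1})}, where μ(I) denotes the image of ∑_{i∈I} l_i in ℤ/nℤ. -/
lemma downclosed_iff {k : ℕ} (T : Finset (Fin k))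
    (hT : ∀ p q : Fin k, p ≤ q → q ∈ T → p ∈ T) (p : Fin k) :
    p ∈ T ↔ p.val < T.card := by
  constructor
  · intro hp
    have h1 : Finset.Iic p ⊆ T := fun q hq => hT q p (Finset.mem_Iic.mp hq) hp
    have := Finset.card_le_card h1
    rwa [Fin.card_Iic, Nat.add_one_le_iff] at this
  · intro hp
    by_contra hnp
    have h1 : T ⊆ Finset.Iio p := by
      intro q hq
      rw [Finset.mem_Iio]
      by_contra hq2
      exact hnp (hT p q (le_of_not_gt hq2) hq)
    have := Finset.card_le_card h1
    rw [Fin.card_Iio] at this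
    omega


/-- The maximal simplex `Δ(x;σ)` of the generalized Tonnetz `Tonn^{n,k}(L)`:
`{x, x+l_{σ(1)}, x+l_{σ(1)}+l_{σ(2)}, …, x+l_{σ(1)}+⋯+l_{σ(k−1)}}`. -/
def tonnDelta (n k : ℕ) (L : Fin k → ℕ) (x : ZMod n) (σ : Equiv.Perm (Fin k)) :
    Finset (ZMod n) :=
  Finset.image
    (fun j : Fin k =>
      x + ((∑ i ∈ Finset.univ.filter (· < j), L (σ i) : ℕ) : ZMod n))
    Finset.univ

/-- A nonempty subset `S ⊆ ℤ/nℤ` is a face of `Tonn^{n,k}(L)` if `S ⊆ Δ(x;σ)`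
for some `x` and `σ`. -/
def IsTonnFace (n k : ℕ) (L : Fin k → ℕ) (S : Finset (ZMod n)) : Prop :=
  S.Nonempty ∧ ∃ (x : ZMod n) (σ : Equiv.Perm (Fin k)), S ⊆ tonnDelta n k L x σ


set_option maxHeartbeats 1000000 in
lemma tonn_forward (n k m : ℕ) (hn : 1 ≤ n) (hk : 1 ≤ k)
    (L : Fin k → ℕ) (hL : ∀ i, 0 < L i) (hsum : ∑ i, L i = n)
    (hm : 1 ≤ m) (hmk : m ≤ k)
    (S : Finset (ZMod n)) (hcard : S.card = m)
    (x : ZMod n) (σ : Equiv.Perm (Fin k)) (hsub : S ⊆ tonnDelta n k L x σ) :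
    ∃ (x' : ZMod n) (I : Fin m → Finset (Fin k)),
        (∀ i, (I i).Nonempty) ∧
        (∀ i j, i ≠ j → Disjoint (I i) (I j)) ∧
        (Finset.univ.biUnion I = Finset.univ) ∧
        S = Finset.image
          (fun j : Fin m =>
            x' + ((∑ i ∈ Finset.univ.filter (· < j), ∑ t ∈ I i, L t : ℕ) : ZMod n))
          Finset.univ := by
  haveI : NeZero n := ⟨by omega⟩
  haveI : NeZero m := ⟨by omega⟩
  classical
  set P : Fin k → ZMod n := fun j =>
    x + ((∑ i ∈ Finset.univ.filter (· < j), L (σ i) : ℕ) : ZMod n) with hP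
  set PS : Fin k → ℕ := fun j => ∑ i ∈ Finset.univ.filter (· < j), L (σ i) with hPS
  have hPSlt : ∀ j j' : Fin k, j < j' → PS j < PS j' := by
    intro j j' hjj
    apply Finset.sum_lt_sum_of_subset (i := j)
    · intro p hp
      simp only [Finset.mem_filter, Finset.mem_univ, true_and] at hp ⊢
      exact lt_trans hp hjj
    · exact Finset.mem_filter.mpr ⟨Finset.mem_univ _, hjj⟩
    · simp
    · exact hL _
    · intro _ _ _; exact Nat.zero_le _
  have hPSn : ∀ j, PS j < n := by
    intro j
    rw [← hsum, ← Equiv.sum_comp σ L]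
    exact Finset.sum_lt_sum_of_subset (Finset.filter_subset _ _) (Finset.mem_univ j)
      (by simp) (hL _) (fun _ _ _ => Nat.zero_le _)
  have hPinj : Function.Injective P := by
    intro j j' h
    have h2 : ((PS j : ℕ) : ZMod n) = ((PS j' : ℕ) : ZMod n) := by
      have h' := h
      simp only [hP] at h'
      exact add_left_cancel h'
    have h3 : PS j = PS j' := by
      have := congrArg ZMod.val h2
      rwa [ZMod.val_cast_of_lt (hPSn j), ZMod.val_cast_of_lt (hPSn j')] at this
    by_contra hne'
    rcases lt_or_gt_of_ne hne' with hlt | hlt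
    · exact absurd h3 (Nat.ne_of_lt (hPSlt _ _ hlt))
    · exact absurd h3.symm (Nat.ne_of_lt (hPSlt _ _ hlt))
  set J : Finset (Fin k) := Finset.univ.filter (fun p => P p ∈ S) with hJ
  have hSJ : S = J.image P := by
    ext s
    simp only [Finset.mem_image, hJ, Finset.mem_filter, Finset.mem_univ, true_and]
    constructor
    · intro hs
      have hs2 := hsub hs
      simp only [tonnDelta, Finset.mem_image, Finset.mem_univ, true_and] at hs2
      obtain ⟨p, hp⟩ := hs2
      have hp' : P p = s := hp
      exact ⟨p, by rw [hp']; exact hs, hp'⟩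
    · rintro ⟨p, hp, rfl⟩; exact hp
  have hJcard : J.card = m := by
    rw [← hcard, hSJ, Finset.card_image_of_injective _ hPinj]
  set e := J.orderIsoOfFin hJcard with he
  set g : Fin m → Fin k := fun r => (e r : Fin k) with hg
  have hgmono : StrictMono g := fun a b hab => Subtype.coe_lt_coe.mpr (e.strictMono hab)
  have hgJ : ∀ r, g r ∈ J := fun r => (e r).2
  set b : Fin k → Fin m := fun p =>
    if h : (Finset.univ.filter (fun r : Fin m => g r ≤ p)).Nonempty then
      (Finset.univ.filter (fun r : Fin m => g r ≤ p)).max' h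
    else ⟨m - 1, by omega⟩ with hb
  have hbg : ∀ r, b (g r) = r := by
    intro r
    have hne2 : (Finset.univ.filter (fun r' : Fin m => g r' ≤ g r)).Nonempty :=
      ⟨r, Finset.mem_filter.mpr ⟨Finset.mem_univ _, le_refl _⟩⟩
    rw [hb]
    simp only [dif_pos hne2]
    apply le_antisymm
    · apply Finset.max'_le
      intro r' hr'
      simp only [Finset.mem_filter, Finset.mem_univ, true_and] at hr'
      exact hgmono.le_iff_le.mp hr'
    · exact Finset.le_max' (Finset.univ.filter (fun r' : Fin m => g r' ≤ g r)) r
        (Finset.mem_filter.mpr ⟨Finset.mem_univ _, le_refl _⟩)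
  have hblt : ∀ (p : Fin k) (j : Fin m), b p < j ↔ (g 0 ≤ p ∧ p < g j) := by
    intro p j
    rw [hb]
    by_cases h : (Finset.univ.filter (fun r : Fin m => g r ≤ p)).Nonempty
    · simp only [dif_pos h]
      constructor
      · intro hlt
        obtain ⟨r, hr⟩ := h
        simp only [Finset.mem_filter, Finset.mem_univ, true_and] at hr
        refine ⟨le_trans (hgmono.monotone (Fin.zero_le r)) hr, ?_⟩
        by_contra hc
        have hjm : j ∈ Finset.univ.filter (fun r : Fin m => g r ≤ p) :=
          Finset.mem_filter.mpr ⟨Finset.mem_univ _, le_of_not_gt hc⟩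
        exact absurd (Finset.le_max' _ j hjm) (not_le_of_gt hlt)
      · rintro ⟨h0, hj⟩
        rw [Finset.max'_lt_iff]
        intro r hr
        simp only [Finset.mem_filter, Finset.mem_univ, true_and] at hr
        exact hgmono.lt_iff_lt.mp (lt_of_le_of_lt hr hj)
    · simp only [dif_neg h]
      constructor
      · intro hlt
        exfalso
        have hle : j ≤ (⟨m - 1, by omega⟩ : Fin m) := by
          rw [Fin.le_def]
          have := j.isLt
          simp only []
          omega
        exact absurd hlt (not_lt_of_ge hle)
      · rintro ⟨h0, _⟩
        exact absurd ⟨0, Finset.mem_filter.mpr ⟨Finset.mem_univ _, h0⟩⟩ h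
  set I : Fin m → Finset (Fin k) := fun r =>
    (Finset.univ.filter (fun p => b p = r)).image σ with hI
  refine ⟨P (g 0), I, ?_, ?_, ?_, ?_⟩
  · intro r
    exact ⟨σ (g r), Finset.mem_image_of_mem σ
      (Finset.mem_filter.mpr ⟨Finset.mem_univ _, hbg r⟩)⟩
  · intro i j hij
    rw [hI]
    rw [Finset.disjoint_image σ.injective]
    rw [Finset.disjoint_left]
    intro p hp hp'
    simp only [Finset.mem_filter, Finset.mem_univ, true_and] at hp hp'
    exact hij (hp ▸ hp')
  · rw [Finset.eq_univ_iff_forall]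
    intro t
    apply Finset.mem_biUnion.mpr
    exact ⟨b (σ.symm t), Finset.mem_univ _, Finset.mem_image.mpr
      ⟨σ.symm t, Finset.mem_filter.mpr ⟨Finset.mem_univ _, rfl⟩, σ.apply_symm_apply t⟩⟩
  · -- S = image of partial sums of I
    have hstep : ∀ j : Fin m,
        P (g 0) + ((∑ i ∈ Finset.univ.filter (· < j), ∑ t ∈ I i, L t : ℕ) : ZMod n)
          = P (g j) := by
      intro j
      have h1 : ∀ i : Fin m, ∑ t ∈ I i, L t =
          ∑ p ∈ Finset.univ.filter (fun p => b p = i), L (σ p) := by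
        intro i
        rw [hI]
        exact Finset.sum_image (fun a _ c _ h => σ.injective h)
      have h2 : ∑ i ∈ Finset.univ.filter (· < j), ∑ t ∈ I i, L t
          = ∑ p ∈ Finset.univ.filter (fun p => b p < j), L (σ p) := by
        rw [Finset.sum_congr rfl (fun i _ => h1 i)]
        rw [Finset.sum_fiberwise_eq_sum_filter Finset.univ
          (Finset.univ.filter (· < j)) b (fun p => L (σ p))]
        congr 1
        ext p
        simp
      have h3 : Finset.univ.filter (fun p => b p < j)
          = Finset.univ.filter (fun p : Fin k => g 0 ≤ p ∧ p < g j) := by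
        ext p
        simp only [Finset.mem_filter, Finset.mem_univ, true_and]
        exact hblt p j
      have h4 : PS (g 0) + ∑ p ∈ Finset.univ.filter (fun p : Fin k => g 0 ≤ p ∧ p < g j),
          L (σ p) = PS (g j) := by
        have hsplit := Finset.sum_filter_add_sum_filter_not
          (Finset.univ.filter (fun p : Fin k => p < g j)) (fun p => p < g 0)
          (fun p => L (σ p))
        rw [Finset.filter_filter, Finset.filter_filter] at hsplit
        have hg0j : g 0 ≤ g j := hgmono.monotone (Fin.zero_le j)
        have e1 : Finset.univ.filter (fun p : Fin k => p < g j ∧ p < g 0)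
            = Finset.univ.filter (fun p : Fin k => p < g 0) := by
          ext p
          simp only [Finset.mem_filter, Finset.mem_univ, true_and]
          exact ⟨fun h => h.2, fun h => ⟨lt_of_lt_of_le h hg0j, h⟩⟩
        have e2 : Finset.univ.filter (fun p : Fin k => p < g j ∧ ¬ p < g 0)
            = Finset.univ.filter (fun p : Fin k => g 0 ≤ p ∧ p < g j) := by
          ext p
          simp only [Finset.mem_filter, Finset.mem_univ, true_and, not_lt]
          tauto
        rw [e1, e2] at hsplit
        rw [hPS]
        simp only []
        rw [← hsplit]
      rw [h2, h3]
      rw [hP]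
      simp only []
      rw [add_assoc, ← Nat.cast_add, h4]
    rw [hSJ]
    have himg2 : Finset.image g Finset.univ = J := by
      ext p
      simp only [Finset.mem_image, Finset.mem_univ, true_and]
      constructor
      · rintro ⟨r, rfl⟩; exact hgJ r
      · intro hp
        exact ⟨e.symm ⟨p, hp⟩, by rw [hg]; simp⟩
    conv_lhs => rw [← himg2]
    rw [Finset.image_image]
    apply Finset.image_congr
    intro j _
    exact (hstep j).symm


lemma tonn_backward (n k m : ℕ) (hn : 1 ≤ n) (hk : 1 ≤ k)
    (L : Fin k → ℕ) (hL : ∀ i, 0 < L i) (hsum : ∑ i, L i = n)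
    (hm : 1 ≤ m) (hmk : m ≤ k)
    (S : Finset (ZMod n))
    (x : ZMod n) (I : Fin m → Finset (Fin k))
    (hne : ∀ i, (I i).Nonempty)
    (hdisj : ∀ i j, i ≠ j → Disjoint (I i) (I j))
    (hcover : Finset.univ.biUnion I = Finset.univ)
    (hS : S = Finset.image
          (fun j : Fin m =>
            x + ((∑ i ∈ Finset.univ.filter (· < j), ∑ t ∈ I i, L t : ℕ) : ZMod n))
          Finset.univ) :
    IsTonnFace n k L S := by
  haveI : NeZero m := ⟨by omega⟩
  classical
  have hcov : ∀ t : Fin k, ∃ i, t ∈ I i := by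
    intro t
    have : t ∈ Finset.univ.biUnion I := hcover ▸ Finset.mem_univ t
    simpa using this
  set f : Fin k → Fin m := fun t => (hcov t).choose with hf
  have hfmem : ∀ t, t ∈ I (f t) := fun t => (hcov t).choose_spec
  have hfuniq : ∀ t i, t ∈ I i → f t = i := by
    intro t i hti
    by_contra hne'
    exact (Finset.disjoint_left.mp (hdisj _ _ hne') (hfmem t)) hti
  have hfilter : ∀ i, Finset.univ.filter (fun t => f t = i) = I i := by
    intro i; ext t
    simp only [Finset.mem_filter, Finset.mem_univ, true_and]
    exact ⟨fun h => h ▸ hfmem t, fun h => hfuniq t i h⟩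
  set σ := Tuple.sort f with hσ
  have hmono : Monotone (f ∘ σ) := Tuple.monotone_sort f
  have himg : ∀ i : Fin m, Finset.image σ (Finset.univ.filter (fun p => f (σ p) = i))
      = I i := by
    intro i
    rw [← hfilter i]
    ext t
    simp only [Finset.mem_image, Finset.mem_filter, Finset.mem_univ, true_and]
    constructor
    · rintro ⟨p, hp, rfl⟩; exact hp
    · intro h; exact ⟨σ.symm t, by simpa using h, by simp⟩
  have hfib : ∀ i : Fin m, (Finset.univ.filter (fun p => f (σ p) = i)).card
      = (I i).card := by
    intro i
    rw [← himg i, Finset.card_image_of_injective _ σ.injective]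
  have hsumI : ∀ i : Fin m,
      ∑ p ∈ Finset.univ.filter (fun p => f (σ p) = i), L (σ p) = ∑ t ∈ I i, L t := by
    intro i
    rw [← himg i, Finset.sum_image (fun a _ c _ h => σ.injective h)]
  have htot : ∑ i, (I i).card = k := by
    rw [← Finset.card_biUnion (fun i _ j _ hij => hdisj i j hij), hcover,
      Finset.card_univ, Fintype.card_fin]
  have hclt : ∀ r : Fin m, (∑ i ∈ Finset.univ.filter (· < r), (I i).card) < k := by
    intro r
    have h := Finset.sum_lt_sum_of_subset (f := fun i => (I i).card)
      (Finset.filter_subset (· < r) Finset.univ)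
      (Finset.mem_univ r) (by simp) (Finset.card_pos.mpr (hne r))
      (fun _ _ _ => Nat.zero_le _)
    rwa [htot] at h
  have hTcard : ∀ r : Fin m,
      (Finset.univ.filter (fun p : Fin k => f (σ p) < r)).card
        = ∑ i ∈ Finset.univ.filter (· < r), (I i).card := by
    intro r
    have h := Finset.sum_card_fiberwise_eq_card_filter (Finset.univ : Finset (Fin k))
      (Finset.univ.filter (· < r)) (fun p => f (σ p))
    have h2 : Finset.univ.filter (fun p : Fin k => f (σ p) ∈ Finset.univ.filter (· < r))
        = Finset.univ.filter (fun p : Fin k => f (σ p) < r) := by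
      ext p; simp
    rw [h2] at h
    rw [← h]
    exact Finset.sum_congr rfl (fun i _ => hfib i)
  have hTdown : ∀ (r : Fin m) (p : Fin k),
      f (σ p) < r ↔ p.val < ∑ i ∈ Finset.univ.filter (· < r), (I i).card := by
    intro r p
    have hd := downclosed_iff (Finset.univ.filter (fun p : Fin k => f (σ p) < r))
      (fun p q hpq hq => Finset.mem_filter.mpr ⟨Finset.mem_univ _,
        lt_of_le_of_lt (hmono hpq) (Finset.mem_filter.mp hq).2⟩) p
    rw [hTcard r] at hd
    simpa using hd
  constructor
  · rw [hS]
    exact (Finset.univ_nonempty).image _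
  refine ⟨x, σ, ?_⟩
  rw [hS]
  intro s hs
  simp only [Finset.mem_image, Finset.mem_univ, true_and] at hs
  obtain ⟨r, rfl⟩ := hs
  simp only [tonnDelta, Finset.mem_image, Finset.mem_univ, true_and]
  refine ⟨⟨∑ i ∈ Finset.univ.filter (· < r), (I i).card, hclt r⟩, ?_⟩
  congr 1
  congr 1
  have hfeq : Finset.univ.filter
      (· < (⟨∑ i ∈ Finset.univ.filter (· < r), (I i).card, hclt r⟩ : Fin k))
      = Finset.univ.filter (fun p : Fin k => f (σ p) ∈ Finset.univ.filter (· < r)) := by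
    ext p
    simp only [Finset.mem_filter, Finset.mem_univ, true_and]
    rw [Fin.lt_def]
    exact (hTdown r p).symm
  rw [hfeq]
  rw [← Finset.sum_fiberwise_eq_sum_filter Finset.univ
    (Finset.univ.filter (· < r)) (fun p => f (σ p)) (fun p => L (σ p))]
  exact Finset.sum_congr rfl (fun i _ => hsumI i)

theorem stmt_0 (n k m : ℕ) (hn : 1 ≤ n) (hk : 1 ≤ k)
    (L : Fin k → ℕ) (hL : ∀ i, 0 < L i) (hsum : ∑ i, L i = n)
    (hm : 1 ≤ m) (hmk : m ≤ k)
    (S : Finset (ZMod n)) (hcard : S.card = m) :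
    IsTonnFace n k L S ↔
      ∃ (x : ZMod n) (I : Fin m → Finset (Fin k)),
        (∀ i, (I i).Nonempty) ∧
        (∀ i j, i ≠ j → Disjoint (I i) (I j)) ∧
        (Finset.univ.biUnion I = Finset.univ) ∧
        S = Finset.image
          (fun j : Fin m =>
            x + ((∑ i ∈ Finset.univ.filter (· < j), ∑ t ∈ I i, L t : ℕ) : ZMod n))
          Finset.univ := by
  constructor
  · rintro ⟨hSne, x, σ, hsub⟩
    exact tonn_forward n k m hn hk L hL hsum hm hmk S hcard x σ hsub
  · rintro ⟨x, I, hne, hdisj, hcover, hS⟩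
    exact tonn_backward n k m hn hk L hL hsum hm hmk S x I hne hdisj hcover hS
end

section
/- If L is generic, then for every 1 ≤ m ≤ k the number of faces of Tonn^{n,k}(L) of cardinality m equals n·(m−1)!·S(k,m), where S(k,m) denotes the number of partitions of the set {1,…,k} into m nonempty blocks (the Stirling number of the second kind). -/
/-- `L` is generic: equal subset sums force equal subsets. -/
def TonnGeneric (k : ℕ) (L : Fin k → ℕ) : Prop :=
  ∀ I J : Finset (Fin k), (∑ i ∈ I, L i) = (∑ j ∈ J, L j) → I = J

/-- The Stirling number of the second kind `S(k,m)`: the number of partitions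
of `{1,…,k}` into `m` nonempty blocks. -/
noncomputable def stirlingSnd (k m : ℕ) : ℕ :=
  Set.ncard {P : Finpartition (Finset.univ : Finset (Fin k)) | P.parts.card = m}

/-!
A face of size `m` is `{x + ℓ(B₀ ∪ ⋯ ∪ B_{t-1}) : t < m}` for a point `x` and an ordered
partition `(B₀, …, B_{m-1})` of `{1, …, k}` into `m` blocks, where `ℓ(I) = ∑_{i ∈ I} lᵢ`:
listing `{1, …, k}` block after block gives a `σ` with the face inside `Δ(x; σ)`, and cutting
`σ` at the vertices of a face `S ⊆ Δ(x; σ)` shows that every face arises this way.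
Since `0 < ℓ(I) < n` for proper nonempty `I`, genericity recovers the blocks from the face once
the base point `x` is fixed, so the pairs `(x, B)` giving one face are exactly the `m` cyclic
rotations of any one of them. Hence `m · #faces = n · m! · S(k, m)`.
-/

open Finset Function Fin.NatCast

theorem Nat.card_eq_card_mul_of_forall_card_fiber {D β : Type*} [Finite D] {Φ : D → β}
    (hΦ : Surjective Φ) {c : ℕ} (h : ∀ d, Nat.card {d' // Φ d' = Φ d} = c) :
    Nat.card D = Nat.card β * c := by
  have : Finite β := Finite.of_surjective Φ hΦ
  have := Fintype.ofFinite β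
  have hfiber (b : β) : Nat.card {d // Φ d = b} = c := by
    obtain ⟨d, rfl⟩ := hΦ b
    exact h d
  rw [← Nat.card_congr (Equiv.sigmaFiberEquiv Φ), Nat.card_sigma,
    Finset.sum_congr rfl fun b _ => hfiber b, Finset.sum_const, Finset.card_univ, smul_eq_mul,
    Nat.card_eq_fintype_card]

theorem Monotone.filter_lt_min'_eq {β γ : Type*} [LinearOrder β] [Fintype β] [LinearOrder γ]
    {g : β → γ} (hg : Monotone g) {c : γ} (h : (univ.filter fun r => c ≤ g r).Nonempty) :
    univ.filter (· < (univ.filter fun r => c ≤ g r).min' h) = univ.filter fun r => g r < c := by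
  ext r
  simp only [mem_filter, mem_univ, true_and]
  constructor
  · intro hr
    by_contra hc
    exact not_le.2 hr (min'_le _ r (by simpa using hc))
  · intro hr
    by_contra hc
    have hmin := (mem_filter.1 (min'_mem _ h)).2
    exact not_le.2 hr (hmin.trans (hg (not_lt.1 hc)))

namespace Tonnetz

variable {α : Type*} {m : ℕ}

structure IsOrderedPartition (f : Fin m → Finset α) : Prop where
  nonempty : ∀ i, (f i).Nonempty
  pairwiseDisjoint : Pairwise (Disjoint on f)
  exists_mem : ∀ a, ∃ i, a ∈ f i

namespace IsOrderedPartition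

variable {f : Fin m → Finset α}

theorem eq_of_mem (hf : IsOrderedPartition f) {a : α} {i j : Fin m} (hi : a ∈ f i)
    (hj : a ∈ f j) : i = j := by
  by_contra hij
  exact disjoint_left.1 (hf.pairwiseDisjoint hij) hi hj

theorem injective (hf : IsOrderedPartition f) : Injective f := by
  intro i j hij
  obtain ⟨a, ha⟩ := hf.nonempty i
  exact hf.eq_of_mem ha (hij ▸ ha)

noncomputable def index (hf : IsOrderedPartition f) (a : α) : Fin m := (hf.exists_mem a).choose

theorem mem_index (hf : IsOrderedPartition f) (a : α) : a ∈ f (hf.index a) :=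
  (hf.exists_mem a).choose_spec

theorem index_eq_iff (hf : IsOrderedPartition f) {a : α} {i : Fin m} :
    hf.index a = i ↔ a ∈ f i :=
  ⟨fun h => h ▸ hf.mem_index a, fun h => hf.eq_of_mem (hf.mem_index a) h⟩

variable [Fintype α] [DecidableEq α]

def toFinpartition (hf : IsOrderedPartition f) : Finpartition (univ : Finset α) :=
  Finpartition.ofExistsUnique (univ.image f) (fun _ _ => subset_univ _)
    (fun a _ => ⟨f (hf.index a), ⟨mem_image_of_mem f (mem_univ _), hf.mem_index a⟩, by
      rintro _ ⟨hp, ha⟩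
      obtain ⟨i, -, rfl⟩ := mem_image.1 hp
      rw [hf.index_eq_iff.2 ha]⟩)
    (fun h => by
      obtain ⟨i, -, hi⟩ := mem_image.1 h
      exact (hf.nonempty i).ne_empty hi)

theorem parts_toFinpartition (hf : IsOrderedPartition f) :
    hf.toFinpartition.parts = univ.image f :=
  rfl

theorem mem_parts_toFinpartition (hf : IsOrderedPartition f) (i : Fin m) :
    f i ∈ hf.toFinpartition.parts :=
  mem_image_of_mem f (mem_univ i)

theorem card_parts_toFinpartition (hf : IsOrderedPartition f) : #hf.toFinpartition.parts = m := by
  rw [parts_toFinpartition, card_image_of_injective _ hf.injective, card_fin]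

end IsOrderedPartition

section Counting

variable [Fintype α] [DecidableEq α]

theorem isOrderedPartition_coe_equiv (P : Finpartition (univ : Finset α))
    (e : Fin m ≃ P.parts) : IsOrderedPartition fun i => (e i : Finset α) where
  nonempty i := P.nonempty_of_mem_parts (e i).2
  pairwiseDisjoint i j hij :=
    P.disjoint (e i).2 (e j).2 fun h => hij (e.injective (Subtype.ext h))
  exists_mem a := by
    obtain ⟨p, hp, ha⟩ := P.exists_mem (mem_univ a)
    exact ⟨e.symm ⟨p, hp⟩, by simpa using ha⟩

theorem toFinpartition_coe_equiv (P : Finpartition (univ : Finset α)) (e : Fin m ≃ P.parts) :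
    (isOrderedPartition_coe_equiv P e).toFinpartition = P := by
  ext p
  simp only [IsOrderedPartition.parts_toFinpartition, mem_image, mem_univ, true_and]
  exact ⟨by rintro ⟨i, rfl⟩; exact (e i).2, fun hp => ⟨e.symm ⟨p, hp⟩, by simp⟩⟩

noncomputable def fiberToFinpartitionEquiv (P : Finpartition (univ : Finset α)) :
    {f : {f : Fin m → Finset α // IsOrderedPartition f} // f.2.toFinpartition = P} ≃
      (Fin m ≃ P.parts) where
  toFun f := Equiv.ofBijective
    (fun i => ⟨f.1.1 i, congrArg Finpartition.parts f.2 ▸ f.1.2.mem_parts_toFinpartition i⟩)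
    ⟨fun i j hij => f.1.2.injective (congrArg Subtype.val hij), fun p => by
      obtain ⟨i, -, hi⟩ := mem_image.1
        (show p.1 ∈ f.1.2.toFinpartition.parts by rw [congrArg Finpartition.parts f.2]; exact p.2)
      exact ⟨i, Subtype.ext hi⟩⟩
  invFun e := ⟨⟨_, isOrderedPartition_coe_equiv P e⟩, toFinpartition_coe_equiv P e⟩
  left_inv _ := rfl
  right_inv _ := Equiv.ext fun _ => rfl

theorem card_isOrderedPartition :
    Nat.card {f : Fin m → Finset α // IsOrderedPartition f} =
      Nat.card {P : Finpartition (univ : Finset α) // #P.parts = m} * m.factorial := by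
  classical
  let π (f : {f : Fin m → Finset α // IsOrderedPartition f}) :
      {P : Finpartition (univ : Finset α) // #P.parts = m} :=
    ⟨f.2.toFinpartition, f.2.card_parts_toFinpartition⟩
  rw [← Nat.card_congr (Equiv.sigmaFiberEquiv π), Nat.card_sigma]
  have hfiber (P : {P : Finpartition (univ : Finset α) // #P.parts = m}) :
      Nat.card {f // π f = P} = m.factorial := by
    rw [← Nat.card_congr ((Equiv.subtypeEquivRight fun f => Subtype.ext_iff).trans
      (fiberToFinpartitionEquiv P.1)).symm, Nat.card_eq_fintype_card,
      Fintype.card_equiv (Fintype.equivFinOfCardEq (by simpa using P.2)).symm, Fintype.card_fin]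
  rw [Finset.sum_congr rfl fun P _ => hfiber P, sum_const, card_univ, smul_eq_mul,
    Nat.card_eq_fintype_card]

end Counting

section PartialSum

variable [NeZero m] {L : α → ℕ} {f : Fin m → Finset α}

/-- Block indices `i : ℕ` are read modulo `m`, so that rotating `f` shifts `t`
(`partialSum_rotate`). -/
def partialSum (L : α → ℕ) (f : Fin m → Finset α) (t : ℕ) : ℕ :=
  ∑ i ∈ range t, ∑ a ∈ f i, L a

@[simp]
theorem partialSum_zero : partialSum L f 0 = 0 := rfl

theorem partialSum_succ (t : ℕ) :
    partialSum L f (t + 1) = partialSum L f t + ∑ a ∈ f t, L a :=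
  sum_range_succ _ _

theorem partialSum_strictMono (hL : ∀ a, 0 < L a) (hf : ∀ i, (f i).Nonempty) :
    StrictMono (partialSum L f) :=
  strictMono_nat_of_lt_succ fun t => by
    obtain ⟨a, ha⟩ := hf t
    rw [partialSum_succ]
    exact Nat.lt_add_of_pos_right (sum_pos' (fun _ _ => Nat.zero_le _) ⟨a, ha, hL a⟩)

def rotate (d : Fin m) (f : Fin m → Finset α) : Fin m → Finset α := fun i => f (i + d)

theorem partialSum_rotate (d : Fin m) (t : ℕ) :
    partialSum L (rotate d f) t + partialSum L f d = partialSum L f (t + d) := by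
  induction t with
  | zero => simp
  | succ t ih =>
    rw [partialSum_succ, add_right_comm, ih, show t + 1 + d = t + d + 1 by omega,
      partialSum_succ]
    simp [rotate]

theorem IsOrderedPartition.rotate (hf : IsOrderedPartition f) (d : Fin m) :
    IsOrderedPartition (rotate d f) where
  nonempty _ := hf.nonempty _
  pairwiseDisjoint _ _ hij := hf.pairwiseDisjoint fun h => hij (add_right_cancel h)
  exists_mem a := by
    obtain ⟨i, hi⟩ := hf.exists_mem a
    exact ⟨i - d, by simpa [Tonnetz.rotate] using hi⟩

variable [Fintype α]

theorem IsOrderedPartition.partialSum_eq_sum_filter (hf : IsOrderedPartition f) {t : ℕ}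
    (ht : t ≤ m) :
    partialSum L f t = ∑ a ∈ univ.filter (fun a => (hf.index a : ℕ) < t), L a := by
  classical
  induction t with
  | zero => simp
  | succ t ih =>
    have hblock : f t = univ.filter (fun a => (hf.index a : ℕ) = t) := by
      ext a
      simp [← hf.index_eq_iff, Fin.ext_iff, Nat.mod_eq_of_lt (show t < m by omega)]
    rw [partialSum_succ, ih (by omega), hblock,
      ← sum_union (disjoint_filter.2 fun _ _ h => h.ne)]
    congr 1
    ext a
    simp only [mem_union, mem_filter, mem_univ, true_and]
    omega

theorem IsOrderedPartition.partialSum_self (hf : IsOrderedPartition f) :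
    partialSum L f m = ∑ a, L a := by
  rw [hf.partialSum_eq_sum_filter le_rfl, filter_true_of_mem fun a _ => (hf.index a).2]

theorem IsOrderedPartition.partialSum_lt (hL : ∀ a, 0 < L a) (hf : IsOrderedPartition f)
    {t : ℕ} (ht : t < m) : partialSum L f t < ∑ a, L a :=
  hf.partialSum_self ▸ partialSum_strictMono hL hf.nonempty ht

theorem IsOrderedPartition.partialSum_add_self (hf : IsOrderedPartition f) (t : ℕ) :
    partialSum L f (t + m) = partialSum L f t + ∑ a, L a := by
  induction t with
  | zero => simp [hf.partialSum_self]
  | succ t ih =>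
    rw [show t + 1 + m = t + m + 1 by omega, partialSum_succ, ih, partialSum_succ]
    simp only [Nat.cast_add, Fin.natCast_self, add_zero]
    omega

theorem IsOrderedPartition.partialSum_modEq (hf : IsOrderedPartition f) (t : ℕ) :
    partialSum L f t ≡ partialSum L f (t % m) [MOD ∑ a, L a] := by
  suffices ∀ q r, partialSum L f (r + m * q) ≡ partialSum L f r [MOD ∑ a, L a] by
    simpa only [Nat.mod_add_div] using this (t / m) (t % m)
  intro q r
  induction q with
  | zero => rfl
  | succ q ih =>
    rw [Nat.mul_succ, ← add_assoc, hf.partialSum_add_self]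
    exact (Nat.add_modEq_left_iff.2 dvd_rfl).trans ih

end PartialSum

section Chain

variable [DecidableEq α] {U : ℕ → Finset α}

theorem isOrderedPartition_of_ssubset [Fintype α] (h0 : U 0 = ∅) (hm : U m = univ)
    (hU : ∀ t < m, U t ⊂ U (t + 1)) : IsOrderedPartition fun t : Fin m => U (t + 1) \ U t where
  nonempty t := sdiff_nonempty.2 (hU t t.2).2
  pairwiseDisjoint := by
    have hle {s t : ℕ} (hst : s ≤ t) (ht : t ≤ m) : U s ⊆ U t := by
      induction t, hst using Nat.le_induction with
      | base => exact subset_rfl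
      | succ t hst ih => exact (ih (by omega)).trans (hU t (by omega)).1
    refine (pairwise_disjoint_on _).2 fun i j hij => disjoint_left.2 fun a hai haj => ?_
    exact (mem_sdiff.1 haj).2 (hle (Fin.lt_def.1 hij) j.2.le (mem_sdiff.1 hai).1)
  exists_mem a := by
    have hex : ∃ t, a ∈ U t := ⟨m, hm ▸ mem_univ a⟩
    have hpos : Nat.find hex ≠ 0 := fun h => by simpa [h, h0] using Nat.find_spec hex
    have hle : Nat.find hex ≤ m := Nat.find_min' hex (hm ▸ mem_univ a)
    refine ⟨⟨Nat.find hex - 1, by omega⟩, mem_sdiff.2 ?_⟩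
    rw [Nat.sub_add_cancel (Nat.pos_of_ne_zero hpos)]
    exact ⟨Nat.find_spec hex, Nat.find_min hex (Nat.sub_one_lt hpos)⟩

theorem partialSum_of_ssubset [NeZero m] {L : α → ℕ} (h0 : U 0 = ∅)
    (hU : ∀ t < m, U t ⊂ U (t + 1)) {t : ℕ} (ht : t ≤ m) :
    partialSum L (fun t : Fin m => U (t + 1) \ U t) t = ∑ a ∈ U t, L a := by
  induction t with
  | zero => simp [h0]
  | succ t ih =>
    rw [partialSum_succ, ih (by omega), Fin.val_natCast, Nat.mod_eq_of_lt (by omega),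
      add_comm, sum_sdiff (hU t (by omega)).1]

end Chain

section PartitionFace

variable [NeZero m] {n : ℕ} {L : α → ℕ} {f f' : Fin m → Finset α}

def partitionFace (n : ℕ) (L : α → ℕ) (f : Fin m → Finset α) (x : ZMod n) :
    Finset (ZMod n) :=
  univ.image fun t : Fin m => x + (partialSum L f t : ZMod n)

variable [Fintype α]

theorem cast_partialSum_injective (hL : ∀ a, 0 < L a) (hsum : ∑ a, L a = n)
    (hf : IsOrderedPartition f) : Injective fun t : Fin m => (partialSum L f t : ZMod n) := by
  intro s t hst
  have := ((ZMod.natCast_eq_natCast_iff _ _ _).1 hst).eq_of_lt_of_lt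
    (hsum ▸ hf.partialSum_lt hL s.2) (hsum ▸ hf.partialSum_lt hL t.2)
  exact Fin.ext ((partialSum_strictMono hL hf.nonempty).injective this)

theorem card_partitionFace (hL : ∀ a, 0 < L a) (hsum : ∑ a, L a = n)
    (hf : IsOrderedPartition f) (x : ZMod n) : #(partitionFace n L f x) = m := by
  rw [partitionFace, card_image_of_injective (f := fun t : Fin m => x + (partialSum L f t : _)) _
    ((add_right_injective x).comp (cast_partialSum_injective hL hsum hf)), card_fin]

theorem partitionFace_rotate (hsum : ∑ a, L a = n) (hf : IsOrderedPartition f) (d : Fin m)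
    (x : ZMod n) :
    partitionFace n L (rotate d f) (x + partialSum L f d) = partitionFace n L f x := by
  have hpoint (s : Fin m) : x + partialSum L f d + partialSum L (rotate d f) s =
      x + partialSum L f (s + d : Fin m) := by
    rw [add_assoc, ← Nat.cast_add, add_comm (partialSum L f d), partialSum_rotate, Fin.val_add,
      (ZMod.natCast_eq_natCast_iff _ _ _).2 (hsum ▸ hf.partialSum_modEq _)]
  simp only [partitionFace, hpoint]
  conv_rhs => rw [← image_univ_of_surjective (add_right_surjective d), image_image]
  rfl

theorem eq_of_partitionFace_eq (hL : ∀ a, 0 < L a) (hsum : ∑ a, L a = n)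
    (hgen : Injective fun I : Finset α => ∑ a ∈ I, L a) (hf : IsOrderedPartition f)
    (hf' : IsOrderedPartition f') {x : ZMod n}
    (h : partitionFace n L f x = partitionFace n L f' x) : f = f' := by
  have hrange {g g' : Fin m → Finset α} (hg : IsOrderedPartition g)
      (hg' : IsOrderedPartition g') (h : partitionFace n L g x = partitionFace n L g' x) :
      Set.range (fun t : Fin m => partialSum L g t) ⊆
        Set.range fun t : Fin m => partialSum L g' t := by
    rintro _ ⟨t, rfl⟩
    obtain ⟨s, -, hs⟩ := mem_image.1 (h ▸ mem_image_of_mem _ (mem_univ t) :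
      x + (partialSum L g t : ZMod n) ∈ partitionFace n L g' x)
    exact ⟨s, ((ZMod.natCast_eq_natCast_iff _ _ _).1 (add_left_cancel hs)).eq_of_lt_of_lt
      (hsum ▸ hg'.partialSum_lt hL s.2) (hsum ▸ hg.partialSum_lt hL t.2)⟩
  have hmono {g : Fin m → Finset α} (hg : IsOrderedPartition g) :
      StrictMono fun t : Fin m => partialSum L g t :=
    (partialSum_strictMono hL hg.nonempty).comp Fin.val_strictMono
  have hC := ((hmono hf).range_inj (hmono hf')).1
    ((hrange hf hf' h).antisymm (hrange hf' hf h.symm))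
  have hC' {t : ℕ} (ht : t ≤ m) : partialSum L f t = partialSum L f' t := by
    rcases ht.lt_or_eq with ht | rfl
    · exact congrFun hC ⟨t, ht⟩
    · rw [hf.partialSum_self, hf'.partialSum_self]
  funext t
  apply hgen
  show ∑ a ∈ f t, L a = ∑ a ∈ f' t, L a
  have h1 := partialSum_succ (L := L) (f := f) t
  have h2 := partialSum_succ (L := L) (f := f') t
  rw [Fin.cast_val_eq_self] at h1 h2
  have := hC' t.2.le
  have := hC' (by omega : (t : ℕ) + 1 ≤ m)
  omega

theorem partitionFace_eq_partitionFace_iff (hL : ∀ a, 0 < L a) (hsum : ∑ a, L a = n)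
    (hgen : Injective fun I : Finset α => ∑ a ∈ I, L a) (hf : IsOrderedPartition f)
    (hf' : IsOrderedPartition f') {x x' : ZMod n} :
    partitionFace n L f' x' = partitionFace n L f x ↔
      ∃ d : Fin m, x' = x + partialSum L f d ∧ f' = rotate d f := by
  constructor
  · intro h
    obtain ⟨d, -, hd⟩ := mem_image.1 (h ▸ mem_image.2 ⟨0, mem_univ _, by simp⟩ :
      x' ∈ partitionFace n L f x)
    refine ⟨d, hd.symm, ?_⟩
    exact (eq_of_partitionFace_eq hL hsum hgen (hf.rotate d) hf'
      ((hd ▸ partitionFace_rotate hsum hf d x).trans h.symm)).symm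
  · rintro ⟨d, rfl, rfl⟩
    exact partitionFace_rotate hsum hf d x

/-- The parametrisations of a face are the `m` rotations of any one of them. -/
theorem card_partitionFace_fiber (hL : ∀ a, 0 < L a) (hsum : ∑ a, L a = n)
    (hgen : Injective fun I : Finset α => ∑ a ∈ I, L a) (hf : IsOrderedPartition f)
    (x : ZMod n) :
    Nat.card {p : ZMod n × {f : Fin m → Finset α // IsOrderedPartition f} //
      partitionFace n L p.2.1 p.1 = partitionFace n L f x} = m := by
  let rot (d : Fin m) : {p : ZMod n × {f : Fin m → Finset α // IsOrderedPartition f} //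
      partitionFace n L p.2.1 p.1 = partitionFace n L f x} :=
    ⟨(x + partialSum L f d, ⟨rotate d f, hf.rotate d⟩), partitionFace_rotate hsum hf d x⟩
  have hinj : Injective rot := fun d d' h =>
    cast_partialSum_injective hL hsum hf (add_left_cancel (congrArg (·.1.1) h))
  have hsurj : Surjective rot := by
    rintro ⟨⟨x', f', hf'⟩, h⟩
    obtain ⟨d, rfl, rfl⟩ := (partitionFace_eq_partitionFace_iff hL hsum hgen hf hf').1 h
    exact ⟨d, rfl⟩
  rw [← Nat.card_eq_of_bijective rot ⟨hinj, hsurj⟩, Nat.card_fin]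

end PartitionFace

section TonnFace

variable [NeZero m] {n k : ℕ} {L : Fin k → ℕ}

/-- Sorting the elements of `Fin k` by the block containing them lists the blocks one after
the other, so every partial sum of `f` is a vertex of `Δ(x; σ)`. -/
theorem isTonnFace_partitionFace {f : Fin m → Finset (Fin k)} (hf : IsOrderedPartition f)
    (x : ZMod n) : IsTonnFace n k L (partitionFace n L f x) := by
  classical
  set σ := Tuple.sort hf.index
  have hmono : Monotone (hf.index ∘ σ) := Tuple.monotone_sort _
  refine ⟨univ_nonempty.image _, x, σ, fun y hy => ?_⟩
  obtain ⟨t, -, rfl⟩ := mem_image.1 hy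
  have hne : (univ.filter fun r => t ≤ (hf.index ∘ σ) r).Nonempty := by
    obtain ⟨a, ha⟩ := hf.nonempty t
    exact ⟨σ.symm a, by simp [hf.index_eq_iff.2 ha]⟩
  refine mem_image.2 ⟨(univ.filter fun r => t ≤ (hf.index ∘ σ) r).min' hne, mem_univ _, ?_⟩
  show x + _ = _
  rw [hmono.filter_lt_min'_eq hne, hf.partialSum_eq_sum_filter t.2.le, sum_filter, sum_filter]
  congr 2
  exact Equiv.sum_comp σ fun a => if hf.index a < t then L a else 0

/-- `σ({0, …, j - 1})`, so that the `j`-th vertex of `Δ(x; σ)` is `x + ∑_{a ∈ prefixSet σ j} L a`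
(`tonnDelta_eq_image_prefixSet`). -/
def prefixSet (σ : Equiv.Perm (Fin k)) (j : Fin k) : Finset (Fin k) :=
  (univ.filter (· < j)).map σ.toEmbedding

@[simp]
theorem apply_mem_prefixSet {σ : Equiv.Perm (Fin k)} {i j : Fin k} :
    σ i ∈ prefixSet σ j ↔ i < j := by
  simp [prefixSet]

theorem prefixSet_mono (σ : Equiv.Perm (Fin k)) : Monotone (prefixSet σ) := fun _ _ hij =>
  map_subset_map.2 fun r hr => by
    simp only [mem_filter, mem_univ, true_and] at hr ⊢
    exact hr.trans_le hij

theorem tonnDelta_eq_image_prefixSet (x : ZMod n) (σ : Equiv.Perm (Fin k)) :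
    tonnDelta n k L x σ =
      univ.image fun j => x + ((∑ a ∈ prefixSet σ j, L a : ℕ) : ZMod n) := by
  simp [tonnDelta, prefixSet, sum_map]

theorem vertex_prefixSet_injective (hL : ∀ a, 0 < L a) (hsum : ∑ a, L a = n) (x : ZMod n)
    (σ : Equiv.Perm (Fin k)) :
    Injective fun j => x + ((∑ a ∈ prefixSet σ j, L a : ℕ) : ZMod n) := by
  have hmono : StrictMono fun j => ∑ a ∈ prefixSet σ j, L a := fun i j hij =>
    sum_lt_sum_of_subset (prefixSet_mono σ hij.le) (apply_mem_prefixSet.2 hij)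
      (by simp) (hL _) fun _ _ _ => Nat.zero_le _
  have hlt (j : Fin k) : ∑ a ∈ prefixSet σ j, L a < n :=
    hsum ▸ sum_lt_sum_of_subset (subset_univ _) (mem_univ (σ j)) (by simp) (hL _)
      fun _ _ _ => Nat.zero_le _
  intro i j hij
  exact hmono.injective (((ZMod.natCast_eq_natCast_iff _ _ _).1
    (add_left_cancel hij)).eq_of_lt_of_lt (hlt i) (hlt j))

/-- Rebased at the first of them, the vertices cut `σ` into the consecutive blocks of an ordered
partition. -/
theorem exists_partitionFace_eq_image (x : ZMod n) (σ : Equiv.Perm (Fin k))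
    {J : Finset (Fin k)} (hJ : #J = m) :
    ∃ (y : ZMod n) (f : Fin m → Finset (Fin k)), IsOrderedPartition f ∧
      partitionFace n L f y = J.image fun j => x + ((∑ a ∈ prefixSet σ j, L a : ℕ) : ZMod n) := by
  classical
  set e := J.orderEmbOfFin hJ
  let U (t : ℕ) : Finset (Fin k) :=
    if ht : t < m then prefixSet σ (e ⟨t, ht⟩) \ prefixSet σ (e 0) else univ
  have hU (t : ℕ) (ht : t < m) : U t = prefixSet σ (e ⟨t, ht⟩) \ prefixSet σ (e 0) := dif_pos ht
  have h0 : U 0 = ∅ := by simp [hU 0 (NeZero.pos m)]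
  have hstep : ∀ t < m, U t ⊂ U (t + 1) := by
    intro t ht
    have hsub : U t ⊆ U (t + 1) := by
      by_cases ht' : t + 1 < m
      · rw [hU t ht, hU _ ht']
        exact sdiff_subset_sdiff (prefixSet_mono σ (e.monotone (Fin.mk_le_mk.2 (by omega))))
          subset_rfl
      · simp [U, ht']
    refine (ssubset_iff_of_subset hsub).2 ⟨σ (e ⟨t, ht⟩), ?_, by simp [hU t ht]⟩
    by_cases ht' : t + 1 < m
    · simp [hU _ ht', e.lt_iff_lt, Fin.mk_lt_mk]
    · simp [U, ht']
  refine ⟨x + ((∑ a ∈ prefixSet σ (e 0), L a : ℕ) : ZMod n), _,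
    isOrderedPartition_of_ssubset h0 (by simp [U]) hstep, ?_⟩
  rw [← image_orderEmbOfFin_univ J hJ, image_image]
  refine image_congr fun t _ => ?_
  rw [partialSum_of_ssubset h0 hstep t.2.le, hU t t.2, add_assoc, ← Nat.cast_add,
    add_comm (∑ a ∈ prefixSet σ (e 0), L a),
    sum_sdiff (prefixSet_mono σ (e.monotone (Fin.zero_le _)))]
  rfl

theorem exists_partitionFace_eq (hL : ∀ a, 0 < L a) (hsum : ∑ a, L a = n)
    {S : Finset (ZMod n)} (hS : IsTonnFace n k L S) (hcard : #S = m) :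
    ∃ (y : ZMod n) (f : Fin m → Finset (Fin k)),
      IsOrderedPartition f ∧ partitionFace n L f y = S := by
  classical
  obtain ⟨-, x, σ, hsub⟩ := hS
  rw [tonnDelta_eq_image_prefixSet] at hsub
  set J := univ.filter fun j => x + ((∑ a ∈ prefixSet σ j, L a : ℕ) : ZMod n) ∈ S
  have hJS : J.image (fun j => x + ((∑ a ∈ prefixSet σ j, L a : ℕ) : ZMod n)) = S := by
    ext y
    simp only [J, mem_image, mem_filter, mem_univ, true_and]
    refine ⟨fun ⟨j, hj, hjy⟩ => hjy ▸ hj, fun hy => ?_⟩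
    obtain ⟨j, -, rfl⟩ := mem_image.1 (hsub hy)
    exact ⟨j, hy, rfl⟩
  have hJ : #J = m := by
    rw [← hcard, ← hJS, card_image_of_injective _ (vertex_prefixSet_injective hL hsum x σ)]
  rw [← hJS]
  exact exists_partitionFace_eq_image x σ hJ

end TonnFace

end Tonnetz

open Tonnetz in
theorem stmt_1_general (n k m : ℕ) (hn : 1 ≤ n)
    (L : Fin k → ℕ) (hL : ∀ i, 0 < L i) (hsum : ∑ i, L i = n)
    (hgen : TonnGeneric k L) (hm : 1 ≤ m) :
    Set.ncard {S : Finset (ZMod n) | IsTonnFace n k L S ∧ S.card = m} =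
      n * (m - 1).factorial * stirlingSnd k m := by
  have : NeZero n := ⟨by omega⟩
  have : NeZero m := ⟨by omega⟩
  let Φ (p : ZMod n × {f : Fin m → Finset (Fin k) // IsOrderedPartition f}) :
      {S : Finset (ZMod n) | IsTonnFace n k L S ∧ S.card = m} :=
    ⟨partitionFace n L p.2.1 p.1,
      isTonnFace_partitionFace p.2.2 p.1, card_partitionFace hL hsum p.2.2 p.1⟩
  have hΦ : Surjective Φ := by
    rintro ⟨S, hS, hcard⟩
    obtain ⟨y, f, hf, rfl⟩ := exists_partitionFace_eq hL hsum hS hcard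
    exact ⟨(y, ⟨f, hf⟩), rfl⟩
  have hcount := Nat.card_eq_card_mul_of_forall_card_fiber hΦ fun p =>
    (Nat.card_congr (Equiv.subtypeEquivRight fun _ => Subtype.ext_iff)).trans
      (card_partitionFace_fiber hL hsum hgen p.2.2 p.1)
  rw [Nat.card_prod, Nat.card_zmod, card_isOrderedPartition,
    ← Nat.mul_factorial_pred (by omega : m ≠ 0)] at hcount
  have hstirling : stirlingSnd k m =
      Nat.card {P : Finpartition (univ : Finset (Fin k)) // #P.parts = m} := rfl
  apply Nat.eq_of_mul_eq_mul_right (by omega : 0 < m)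
  rw [hstirling, ← Nat.card_coe_set_eq, ← hcount]
  ring

theorem stmt_1 (n k m : ℕ) (hn : 1 ≤ n) (hk : 1 ≤ k)
    (L : Fin k → ℕ) (hL : ∀ i, 0 < L i) (hsum : ∑ i, L i = n)
    (hgen : TonnGeneric k L) (hm : 1 ≤ m) (hmk : m ≤ k) :
    Set.ncard {S : Finset (ZMod n) | IsTonnFace n k L S ∧ S.card = m} =
      n * (m - 1).factorial * stirlingSnd k m :=
  stmt_1_general n k m hn L hL hsum hgen hm
end

section
/- If L is generic and k ≥ 2, then ∑_{m=1}^{k} (−1)^{m−1} f_{m−1} = 0, where f_{m−1} denotes the number of faces of Tonn^{n,k}(L) of cardinality m; that is, the Euler characteristic of the generalized Tonnetz Tonn^{n,k}(L) is 0. -/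
open Finset

lemma sum_mul_ncard_eq_sum_filter {α β R : Type*} [Fintype α] [DecidableEq β] [CommSemiring R]
    (P : α → Prop) [DecidablePred P] (g : α → β) (s : Finset β) (hg : ∀ x, P x → g x ∈ s)
    (c : β → R) :
    ∑ m ∈ s, c m * (Set.ncard {x | P x ∧ g x = m} : R) = ∑ x ∈ univ.filter P, c (g x) := by
  rw [← sum_fiberwise_of_maps_to' (fun x hx => hg x (mem_filter.1 hx).2)]
  refine sum_congr rfl fun m _ => ?_
  have hset : {x | P x ∧ g x = m} = ↑((univ.filter P).filter fun x => g x = m) := by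
    ext x; simp
  rw [hset, Set.ncard_coe_finset, sum_const, nsmul_eq_mul, mul_comm]

lemma sum_neg_one_pow_card_eq_zero_of_involution {α R : Type*} [CommRing R]
    (Ω : Finset (Finset α)) (f : Finset α → Finset α) (hf : ∀ S ∈ Ω, f S ∈ Ω)
    (hff : ∀ S ∈ Ω, f (f S) = S)
    (hcard : ∀ S ∈ Ω, (f S).card + 1 = S.card ∨ (f S).card = S.card + 1) :
    ∑ S ∈ Ω, (-1 : R) ^ S.card = 0 := by
  refine sum_involution (fun S _ => f S) (fun S hS => ?_) (fun S hS _ hfix => ?_) hf hff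
  · rcases hcard S hS with h | h
    · rw [← h]; ring
    · rw [h]; ring
  · rcases hcard S hS with h | h <;> rw [hfix] at h <;> omega

lemma ZMod.natCast_inj_of_lt {n a b : ℕ} (ha : a < n) (hb : b < n)
    (h : (a : ZMod n) = b) : a = b := by
  simpa [Nat.mod_eq_of_lt ha, Nat.mod_eq_of_lt hb] using (ZMod.natCast_eq_natCast_iff' a b n).1 h

lemma ZMod.natCast_ne_zero_of_lt {n d : ℕ} (hd : 0 < d) (hdn : d < n) : (d : ZMod n) ≠ 0 :=
  fun h => hd.ne' (Nat.eq_zero_of_dvd_of_lt ((ZMod.natCast_eq_zero_iff d n).1 h) hdn)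

namespace Tonnetz

section Gap

variable {n : ℕ} {S : Finset (ZMod n)} {p : ZMod n} {d g : ℕ}

/-- Clockwise distance from `p` to the next point of `S`: it is `n` when `S = {p}`, and `0`
(junk) when `p ∉ S`. -/
noncomputable def gap (S : Finset (ZMod n)) (p : ZMod n) : ℕ :=
  sInf {d : ℕ | 0 < d ∧ p + d ∈ S}

lemma gap_le (hd : 0 < d) (h : p + d ∈ S) : gap S p ≤ d :=
  Nat.sInf_le (show d ∈ {d : ℕ | 0 < d ∧ p + d ∈ S} from ⟨hd, h⟩)

lemma add_notMem_of_lt_gap (hd : 0 < d) (h : d < gap S p) : p + d ∉ S :=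
  fun hm => Nat.notMem_of_lt_sInf h (show d ∈ {d : ℕ | 0 < d ∧ p + d ∈ S} from ⟨hd, hm⟩)

lemma gap_eq_of (hg : 0 < g) (hmem : p + g ∈ S)
    (hmin : ∀ d, 0 < d → d < g → p + d ∉ S) : gap S p = g := by
  refine le_antisymm (gap_le hg hmem) (not_lt.1 fun hlt => ?_)
  obtain ⟨hpos, hm⟩ : 0 < gap S p ∧ p + gap S p ∈ S :=
    Nat.sInf_mem (s := {d : ℕ | 0 < d ∧ p + d ∈ S}) ⟨g, hg, hmem⟩
  exact hmin _ hpos hlt hm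

variable [NeZero n]

lemma gap_pos_and_mem (hp : p ∈ S) : 0 < gap S p ∧ p + gap S p ∈ S :=
  Nat.sInf_mem (s := {d : ℕ | 0 < d ∧ p + d ∈ S}) ⟨n, NeZero.pos n, by simpa using hp⟩

lemma gap_le_card (hp : p ∈ S) : gap S p ≤ n :=
  gap_le (NeZero.pos n) (by simpa using hp)

lemma gap_insert (hp : p ∈ S) (hd : 0 < d) (hdg : d < gap S p) :
    gap (insert (p + d) S) p = d := by
  have hdn : d < n := hdg.trans_le (gap_le_card hp)
  refine gap_eq_of hd (mem_insert_self _ _) fun e he hed hmem => ?_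
  rcases mem_insert.1 hmem with h | h
  · exact hed.ne (ZMod.natCast_inj_of_lt (hed.trans hdn) hdn (add_left_cancel h))
  · exact add_notMem_of_lt_gap he (hed.trans hdg) h

lemma gap_erase (hp : p ∈ S) (hlt : gap S p < n) :
    gap (S.erase (p + gap S p)) p = gap S p + gap S (p + gap S p) := by
  obtain ⟨g₁, hg⟩ : ∃ g₁, gap S p = g₁ := ⟨_, rfl⟩
  obtain ⟨hg₁, hq⟩ := hg ▸ gap_pos_and_mem hp
  rw [hg] at hlt ⊢
  obtain ⟨hg₂, hq₂⟩ := gap_pos_and_mem hq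
  obtain ⟨q, hqdef⟩ : ∃ q, p + (g₁ : ZMod n) = q := ⟨_, rfl⟩
  rw [hqdef] at hq hg₂ hq₂ ⊢
  have hpq : q + ((n - g₁ : ℕ) : ZMod n) = p := by
    simp [← hqdef, Nat.cast_sub hlt.le]
  have hg₂le : gap S q ≤ n - g₁ := gap_le (d := n - g₁) (by omega) (by rwa [hpq])
  refine gap_eq_of (g := g₁ + gap S q) (by omega) (mem_erase.2 ⟨?_, ?_⟩) fun d hd hdlt hmem => ?_
  · rw [Nat.cast_add, ← add_assoc, hqdef]
    intro h
    exact ZMod.natCast_ne_zero_of_lt (n := n) (d := gap S q) hg₂ (by omega) (by simpa using h)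
  · rwa [Nat.cast_add, ← add_assoc, hqdef]
  obtain ⟨hne, hmem⟩ := mem_erase.1 hmem
  rcases lt_trichotomy d g₁ with h | rfl | h
  · exact add_notMem_of_lt_gap hd (hg ▸ h) hmem
  · exact hne hqdef
  · have hd' : p + (d : ZMod n) = q + ((d - g₁ : ℕ) : ZMod n) := by
      simp [← hqdef, Nat.cast_sub h.le]
    exact add_notMem_of_lt_gap (by omega) (by omega) (hd' ▸ hmem)

end Gap

section PrefixSum

variable {n k : ℕ} (L : Fin k → ℕ) (τ : Equiv.Perm (Fin k))

def prefixSum (j : ℕ) : ℕ :=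
  ∑ i ∈ univ.filter (fun i : Fin k => (i : ℕ) < j), L (τ i)

lemma tonnDelta_eq_image (x : ZMod n) :
    tonnDelta n k L x τ = univ.image fun j : Fin k => x + (prefixSum L τ j : ZMod n) := rfl

lemma add_prefixSum_mem_tonnDelta (x : ZMod n) {j : ℕ} (hj : j < k) :
    x + (prefixSum L τ j : ZMod n) ∈ tonnDelta n k L x τ :=
  mem_image.2 ⟨⟨j, hj⟩, mem_univ _, rfl⟩

@[simp]
lemma prefixSum_zero : prefixSum L τ 0 = 0 := by
  simp [prefixSum]

lemma prefixSum_of_le {j : ℕ} (hj : k ≤ j) : prefixSum L τ j = ∑ i, L i := by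
  rw [prefixSum, filter_true_of_mem fun i _ => i.isLt.trans_le hj]
  exact Equiv.sum_comp τ L

lemma prefixSum_succ {j : ℕ} (hj : j < k) :
    prefixSum L τ (j + 1) = prefixSum L τ j + L (τ ⟨j, hj⟩) := by
  have : univ.filter (fun i : Fin k => (i : ℕ) < j + 1)
      = insert ⟨j, hj⟩ (univ.filter fun i : Fin k => (i : ℕ) < j) := by
    ext i
    simp only [mem_filter, mem_univ, true_and, mem_insert, Fin.ext_iff]
    omega
  rw [prefixSum, this, sum_insert (by simp), add_comm]
  rfl

lemma prefixSum_mono : Monotone (prefixSum L τ) := fun _ _ h =>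
  sum_le_sum_of_subset fun i hi => by
    simp only [mem_filter, mem_univ, true_and] at hi ⊢
    omega

variable {L}

lemma prefixSum_lt_prefixSum (hL : ∀ i, 0 < L i) {j j' : ℕ} (h : j < j') (h' : j' ≤ k) :
    prefixSum L τ j < prefixSum L τ j' := by
  have hj : j < k := h.trans_le h'
  calc prefixSum L τ j < prefixSum L τ (j + 1) := by
        rw [prefixSum_succ L τ hj]; exact Nat.lt_add_of_pos_right (hL _)
    _ ≤ prefixSum L τ j' := prefixSum_mono L τ h

lemma prefixSum_le (hsum : ∑ i, L i = n) (j : ℕ) : prefixSum L τ j ≤ n :=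
  hsum ▸ (prefixSum_mono L τ (le_max_left j k)).trans_eq (prefixSum_of_le L τ (le_max_right j k))

lemma prefixSum_lt (hL : ∀ i, 0 < L i) (hsum : ∑ i, L i = n) {j : ℕ} (hj : j < k) :
    prefixSum L τ j < n :=
  hsum ▸ prefixSum_of_le L τ le_rfl ▸ prefixSum_lt_prefixSum τ hL hj le_rfl

lemma prefixSum_swap {a b : Fin k} {t : ℕ} (ha : (a : ℕ) < t) (hb : (b : ℕ) < t) :
    prefixSum L ((Equiv.swap a b).trans τ) t = prefixSum L τ t := by
  refine sum_equiv (Equiv.swap a b) (fun i => ?_) fun i _ => rfl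
  simp only [mem_filter, mem_univ, true_and]
  rcases eq_or_ne i a with rfl | hia
  · simpa using ⟨fun _ => hb, fun _ => ha⟩
  rcases eq_or_ne i b with rfl | hib
  · simpa using ⟨fun _ => ha, fun _ => hb⟩
  rw [Equiv.swap_apply_of_ne_of_ne hia hib]

end PrefixSum

section Rotation

variable {n k : ℕ} {L : Fin k → ℕ}

lemma prefixSum_finRotate [NeZero k] (τ : Equiv.Perm (Fin k)) {j : ℕ} (hj : j < k) :
    L (τ 0) + prefixSum L ((finRotate k).trans τ) j = prefixSum L τ (j + 1) := by
  induction j with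
  | zero => simp [prefixSum_succ L τ hj]
  | succ j ih =>
    have hrot : finRotate k ⟨j, by omega⟩ = ⟨j + 1, hj⟩ :=
      Fin.ext (by rw [finRotate_apply, Fin.val_add_one_of_lt' (by simpa using hj)])
    rw [prefixSum_succ _ _ (by omega), ← add_assoc, ih (by omega), prefixSum_succ L τ hj,
      Equiv.trans_apply, hrot]

lemma tonnDelta_finRotate [NeZero k] (hsum : ∑ i, L i = n) (x : ZMod n)
    (τ : Equiv.Perm (Fin k)) :
    tonnDelta n k L (x + L (τ 0)) ((finRotate k).trans τ) = tonnDelta n k L x τ := by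
  rw [tonnDelta_eq_image, tonnDelta_eq_image]
  conv_rhs => rw [← image_univ_equiv (finRotate k), image_image]
  congr 1
  funext j
  have hval : ((finRotate k j : Fin k) : ℕ) = (j + 1) % k := by
    rw [finRotate_apply, Fin.val_add, Fin.val_one', Nat.add_mod_mod]
  rw [Function.comp_apply, hval, add_assoc, ← Nat.cast_add, prefixSum_finRotate τ j.isLt]
  rcases (Nat.succ_le_of_lt j.isLt).lt_or_eq with h | (h : (j : ℕ) + 1 = k)
  · rw [Nat.mod_eq_of_lt h]
  · rw [h, Nat.mod_self, prefixSum_zero, prefixSum_of_le L τ le_rfl, hsum, ZMod.natCast_self,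
      Nat.cast_zero]

lemma exists_tonnDelta_eq_of_mem (hsum : ∑ i, L i = n) {x y : ZMod n}
    {σ : Equiv.Perm (Fin k)} (hy : y ∈ tonnDelta n k L x σ) :
    ∃ τ, tonnDelta n k L y τ = tonnDelta n k L x σ := by
  obtain ⟨u, -, rfl⟩ := mem_image.1 hy
  have : NeZero k := ⟨u.pos.ne'⟩
  suffices ∀ j < k, ∀ x σ, ∃ τ,
      tonnDelta n k L (x + prefixSum L σ j) τ = tonnDelta n k L x σ from this u u.isLt x σ
  intro j
  induction j with
  | zero => exact fun _ x σ => ⟨σ, by simp⟩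
  | succ j ih =>
    intro hj x σ
    obtain ⟨τ, hτ⟩ := ih (by omega) (x + L (σ 0)) ((finRotate k).trans σ)
    refine ⟨τ, ?_⟩
    rw [← prefixSum_finRotate σ (by omega : j < k), Nat.cast_add, ← add_assoc, hτ,
      tonnDelta_finRotate hsum]

end Rotation

section NextIndex

variable {J : Finset ℕ} {k j j' a : ℕ}

def nextIdx (J : Finset ℕ) (k j : ℕ) : ℕ :=
  (insert k (J.filter (j < ·))).min' (insert_nonempty _ _)

lemma nextIdx_le : nextIdx J k j ≤ k :=
  min'_le _ _ (mem_insert_self _ _)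

lemma nextIdx_le_of_mem (ha : a ∈ J) (h : j < a) : nextIdx J k j ≤ a :=
  min'_le _ _ (mem_insert_of_mem (mem_filter.2 ⟨ha, h⟩))

lemma nextIdx_eq_or_mem : nextIdx J k j = k ∨ nextIdx J k j ∈ J ∧ j < nextIdx J k j := by
  have h := min'_mem (insert k (J.filter (j < ·))) (insert_nonempty _ _)
  rw [mem_insert, mem_filter] at h
  exact h

lemma lt_nextIdx (hj : j < k) : j < nextIdx J k j := by
  rcases nextIdx_eq_or_mem (J := J) (k := k) (j := j) with h | h
  · omega
  · exact h.2

lemma exists_le_lt_nextIdx (h0 : 0 ∈ J) (ha : a < k) : ∃ j ∈ J, j ≤ a ∧ a < nextIdx J k j := by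
  have hne : (J.filter (· ≤ a)).Nonempty := ⟨0, mem_filter.2 ⟨h0, a.zero_le⟩⟩
  obtain ⟨hj, hja⟩ := mem_filter.1 (max'_mem _ hne)
  refine ⟨_, hj, hja, not_le.1 fun hle => ?_⟩
  rcases nextIdx_eq_or_mem (J := J) (k := k) (j := (J.filter (· ≤ a)).max' hne)
    with h | ⟨hm, hlt⟩
  · omega
  · exact hlt.not_ge (le_max' _ _ (mem_filter.2 ⟨hm, hle⟩))

lemma eq_of_le_lt_nextIdx (hj : j ∈ J) (hj' : j' ∈ J) (h : j ≤ a ∧ a < nextIdx J k j)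
    (h' : j' ≤ a ∧ a < nextIdx J k j') : j = j' := by
  rcases lt_trichotomy j j' with hlt | rfl | hlt
  · have := nextIdx_le_of_mem (k := k) hj' hlt; omega
  · rfl
  · have := nextIdx_le_of_mem (k := k) hj hlt; omega

end NextIndex

def permIco {k : ℕ} (τ : Equiv.Perm (Fin k)) (a b : ℕ) : Finset (Fin k) :=
  (univ.filter fun i : Fin k => a ≤ (i : ℕ) ∧ (i : ℕ) < b).map τ.toEmbedding

lemma mem_permIco {k : ℕ} {τ : Equiv.Perm (Fin k)} {a b : ℕ} {i : Fin k} :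
    i ∈ permIco τ a b ↔ a ≤ (τ.symm i : ℕ) ∧ (τ.symm i : ℕ) < b := by
  simp [permIco, mem_map_equiv]

lemma sum_permIco {k : ℕ} (L : Fin k → ℕ) (τ : Equiv.Perm (Fin k)) {a b : ℕ} (hab : a ≤ b) :
    ∑ i ∈ permIco τ a b, L i = prefixSum L τ b - prefixSum L τ a := by
  rw [permIco, sum_map]
  have hsplit := sum_filter_add_sum_filter_not
    (univ.filter fun i : Fin k => (i : ℕ) < b) (fun i : Fin k => (i : ℕ) < a) (fun i => L (τ i))
  rw [filter_filter, filter_filter] at hsplit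
  have h1 : (univ.filter fun i : Fin k => (i : ℕ) < b ∧ (i : ℕ) < a)
      = univ.filter fun i : Fin k => (i : ℕ) < a := by
    ext i; simp only [mem_filter, mem_univ, true_and]; omega
  have h2 : (univ.filter fun i : Fin k => (i : ℕ) < b ∧ ¬(i : ℕ) < a)
      = univ.filter fun i : Fin k => a ≤ (i : ℕ) ∧ (i : ℕ) < b := by
    ext i; simp only [mem_filter, mem_univ, true_and]; omega
  rw [h1, h2] at hsplit
  simp only [prefixSum, Equiv.coe_toEmbedding, ← hsplit]
  omega

section Representation

variable {n k : ℕ} {L : Fin k → ℕ} {τ : Equiv.Perm (Fin k)} {S : Finset (ZMod n)}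
  {p q : ZMod n} {j : ℕ}

def hitIndices (L : Fin k → ℕ) (τ : Equiv.Perm (Fin k)) (p : ZMod n) (S : Finset (ZMod n)) :
    Finset ℕ :=
  (range k).filter fun j => p + (prefixSum L τ j : ZMod n) ∈ S

lemma exists_mem_hitIndices (hS : S ⊆ tonnDelta n k L p τ) (hq : q ∈ S) :
    ∃ j ∈ hitIndices L τ p S, q = p + prefixSum L τ j := by
  obtain ⟨j, -, rfl⟩ := mem_image.1 (hS hq)
  exact ⟨j, mem_filter.2 ⟨mem_range.2 j.isLt, hq⟩, rfl⟩

lemma zero_mem_hitIndices (hS : S ⊆ tonnDelta n k L p τ) (hp : p ∈ S) :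
    0 ∈ hitIndices L τ p S := by
  obtain ⟨j, -, -⟩ := mem_image.1 (hS hp)
  exact mem_filter.2 ⟨mem_range.2 j.pos, by simpa using hp⟩

lemma gap_add_prefixSum (hL : ∀ i, 0 < L i) (hsum : ∑ i, L i = n) (hp : p ∈ S)
    (hS : S ⊆ tonnDelta n k L p τ) (hj : j ∈ hitIndices L τ p S) :
    gap S (p + prefixSum L τ j)
      = prefixSum L τ (nextIdx (hitIndices L τ p S) k j) - prefixSum L τ j := by
  obtain ⟨hjk, -⟩ := mem_filter.1 hj
  set m := nextIdx (hitIndices L τ p S) k j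
  have hjm : j < m := lt_nextIdx (mem_range.1 hjk)
  have hlt : prefixSum L τ j < prefixSum L τ m := prefixSum_lt_prefixSum τ hL hjm nextIdx_le
  have hmn : prefixSum L τ m ≤ n := prefixSum_le τ hsum m
  have hshift : ∀ d : ℕ,
      p + (prefixSum L τ j : ZMod n) + d = p + ((prefixSum L τ j + d : ℕ) : ZMod n) :=
    fun d => by push_cast; ring
  refine gap_eq_of (by omega) ?_ fun d hd hdm hmem => ?_
  · rw [hshift, Nat.add_sub_cancel' hlt.le]
    rcases nextIdx_eq_or_mem (J := hitIndices L τ p S) (k := k) (j := j) with h | h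
    · rwa [show m = k from h, prefixSum_of_le L τ le_rfl, hsum, ZMod.natCast_self, add_zero]
    · exact (mem_filter.1 h.1).2
  · rw [hshift] at hmem
    obtain ⟨i, hi, hieq⟩ := exists_mem_hitIndices hS hmem
    have hik : i < k := mem_range.1 (mem_filter.1 hi).1
    have hpre : prefixSum L τ j + d = prefixSum L τ i :=
      ZMod.natCast_inj_of_lt (by omega) (prefixSum_lt τ hL hsum hik) (add_left_cancel hieq)
    have hji : j < i := (prefixSum_mono L τ).reflect_lt (by omega)
    have him : i < m := (prefixSum_mono L τ).reflect_lt (by omega)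
    exact (nextIdx_le_of_mem hi hji).not_gt him

/-- For generic `L`, the set of indices whose lengths add up to the gap at `p`
(junk when the gap is not such a sum). -/
noncomputable def block (L : Fin k → ℕ) (S : Finset (ZMod n)) (p : ZMod n) : Finset (Fin k) :=
  Classical.epsilon fun I => ∑ i ∈ I, L i = gap S p

lemma block_eq (hgen : TonnGeneric k L) {I : Finset (Fin k)} (hI : ∑ i ∈ I, L i = gap S p) :
    block L S p = I :=
  hgen _ _ ((Classical.epsilon_spec (p := fun I => ∑ i ∈ I, L i = gap S p) ⟨I, hI⟩).trans hI.symm)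

lemma block_add_prefixSum (hL : ∀ i, 0 < L i) (hsum : ∑ i, L i = n) (hgen : TonnGeneric k L)
    (hp : p ∈ S) (hS : S ⊆ tonnDelta n k L p τ) (hj : j ∈ hitIndices L τ p S) :
    block L S (p + prefixSum L τ j) = permIco τ j (nextIdx (hitIndices L τ p S) k j) := by
  refine block_eq hgen ?_
  rw [sum_permIco L τ (lt_nextIdx (mem_range.1 (mem_filter.1 hj).1)).le,
    gap_add_prefixSum hL hsum hp hS hj]

lemma exists_subset_tonnDelta (hsum : ∑ i, L i = n) (hface : IsTonnFace n k L S) (hp : p ∈ S) :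
    ∃ τ, S ⊆ tonnDelta n k L p τ := by
  obtain ⟨-, x, σ, hsub⟩ := hface
  obtain ⟨τ, hτ⟩ := exists_tonnDelta_eq_of_mem hsum (hsub hp)
  exact ⟨τ, hτ ▸ hsub⟩

lemma sum_block_eq_gap (hL : ∀ i, 0 < L i) (hsum : ∑ i, L i = n) (hface : IsTonnFace n k L S)
    (hp : p ∈ S) : ∑ i ∈ block L S p, L i = gap S p := by
  obtain ⟨τ, hS⟩ := exists_subset_tonnDelta hsum hface hp
  have h0 := zero_mem_hitIndices hS hp
  refine Classical.epsilon_spec (p := fun I => ∑ i ∈ I, L i = gap S p)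
    ⟨permIco τ 0 (nextIdx (hitIndices L τ p S) k 0), ?_⟩
  simpa [sum_permIco L τ (Nat.zero_le _)] using (gap_add_prefixSum hL hsum hp hS h0).symm

lemma existsUnique_mem_block (hL : ∀ i, 0 < L i) (hsum : ∑ i, L i = n) (hgen : TonnGeneric k L)
    (hface : IsTonnFace n k L S) (i : Fin k) : ∃! q, q ∈ S ∧ i ∈ block L S q := by
  obtain ⟨p, hp⟩ := hface.1
  obtain ⟨τ, hS⟩ := exists_subset_tonnDelta hsum hface hp
  have hmem : ∀ j ∈ hitIndices L τ p S, i ∈ block L S (p + prefixSum L τ j) ↔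
      j ≤ (τ.symm i : ℕ) ∧ (τ.symm i : ℕ) < nextIdx (hitIndices L τ p S) k j := fun j hj => by
    rw [block_add_prefixSum hL hsum hgen hp hS hj, mem_permIco]
  obtain ⟨j, hj, hji⟩ := exists_le_lt_nextIdx (zero_mem_hitIndices hS hp) (τ.symm i).isLt
  refine ⟨p + prefixSum L τ j, ⟨(mem_filter.1 hj).2, (hmem j hj).2 hji⟩, ?_⟩
  rintro q ⟨hq, hiq⟩
  obtain ⟨j', hj', rfl⟩ := exists_mem_hitIndices hS hq
  rw [eq_of_le_lt_nextIdx hj' hj ((hmem j' hj').1 hiq) hji]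

/-- Moving `i₀` to the front of `τ` leaves the prefix sums beyond the block of `p` unchanged. -/
lemma isTonnFace_insert (hL : ∀ i, 0 < L i) (hsum : ∑ i, L i = n) (hgen : TonnGeneric k L)
    (h1k : 1 < k) (hface : IsTonnFace n k L S) (hp : p ∈ S) {i₀ : Fin k}
    (hi₀ : i₀ ∈ block L S p) : IsTonnFace n k L (insert (p + L i₀) S) := by
  obtain ⟨τ, hS⟩ := exists_subset_tonnDelta hsum hface hp
  have h0 := zero_mem_hitIndices hS hp
  have hblock := block_add_prefixSum hL hsum hgen hp hS h0
  rw [prefixSum_zero, Nat.cast_zero, add_zero] at hblock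
  have ha := (mem_permIco.1 (hblock ▸ hi₀)).2
  set z : Fin k := ⟨0, by omega⟩
  set τ' := (Equiv.swap z (τ.symm i₀)).trans τ
  have hpre : ∀ t, (τ.symm i₀ : ℕ) < t → prefixSum L τ' t = prefixSum L τ t := fun t ht =>
    prefixSum_swap τ (show (0 : ℕ) < t by omega) ht
  have hpre1 : prefixSum L τ' 1 = L i₀ := by
    simp [prefixSum_succ L τ' (show 0 < k by omega), τ', z]
  refine ⟨insert_nonempty _ _, p, τ', insert_subset_iff.2 ⟨?_, fun q hq => ?_⟩⟩
  · simpa [hpre1] using add_prefixSum_mem_tonnDelta L τ' p h1k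
  obtain ⟨j, hj, rfl⟩ := exists_mem_hitIndices hS hq
  rcases Nat.eq_zero_or_pos j with rfl | hj0
  · simpa using add_prefixSum_mem_tonnDelta L τ' p (show 0 < k by omega)
  · rw [← hpre j (ha.trans_le (nextIdx_le_of_mem hj hj0))]
    exact add_prefixSum_mem_tonnDelta L τ' p (mem_range.1 (mem_filter.1 hj).1)

end Representation

section Toggle

variable {n k : ℕ} {L : Fin k → ℕ} {S : Finset (ZMod n)} {p : ZMod n} {i₀ : Fin k}

noncomputable def pivot (L : Fin k → ℕ) (i₀ : Fin k) (S : Finset (ZMod n)) : ZMod n :=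
  Classical.epsilon fun p => p ∈ S ∧ i₀ ∈ block L S p

noncomputable def toggle (L : Fin k → ℕ) (i₀ : Fin k) (S : Finset (ZMod n)) :
    Finset (ZMod n) :=
  if block L S (pivot L i₀ S) = {i₀} then S.erase (pivot L i₀ S + L i₀)
  else insert (pivot L i₀ S + L i₀) S

lemma pivot_spec (hL : ∀ i, 0 < L i) (hsum : ∑ i, L i = n) (hgen : TonnGeneric k L)
    (hface : IsTonnFace n k L S) : pivot L i₀ S ∈ S ∧ i₀ ∈ block L S (pivot L i₀ S) :=
  Classical.epsilon_spec (existsUnique_mem_block hL hsum hgen hface i₀).exists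

lemma pivot_eq (hL : ∀ i, 0 < L i) (hsum : ∑ i, L i = n) (hgen : TonnGeneric k L)
    (hface : IsTonnFace n k L S) (hp : p ∈ S) (hi₀ : i₀ ∈ block L S p) : pivot L i₀ S = p :=
  (existsUnique_mem_block hL hsum hgen hface i₀).unique (pivot_spec hL hsum hgen hface) ⟨hp, hi₀⟩

lemma apply_lt_of_sum_eq (hL : ∀ i, 0 < L i) (hsum : ∑ i, L i = n) (h1k : 1 < k) (i₀ : Fin k) :
    L i₀ < n := by
  have : Nontrivial (Fin k) := Fin.nontrivial_iff_two_le.2 h1k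
  obtain ⟨i, hi⟩ := exists_ne i₀
  calc L i₀ < L i₀ + L i := Nat.lt_add_of_pos_right (hL i)
    _ = ∑ j ∈ {i₀, i}, L j := (sum_pair hi.symm).symm
    _ ≤ n := hsum ▸ sum_le_sum_of_subset (subset_univ _)

variable [NeZero n]

lemma block_erase (hL : ∀ i, 0 < L i) (hsum : ∑ i, L i = n) (hgen : TonnGeneric k L)
    (h1k : 1 < k) (hface : IsTonnFace n k L S) (hp : p ∈ S) (hb : block L S p = {i₀}) :
    p + L i₀ ∈ S ∧ p + L i₀ ≠ p ∧
      i₀ ∈ block L (S.erase (p + L i₀)) p ∧ block L (S.erase (p + L i₀)) p ≠ {i₀} := by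
  have hg : gap S p = L i₀ := by rw [← sum_block_eq_gap hL hsum hface hp, hb, sum_singleton]
  have hLn := apply_lt_of_sum_eq hL hsum h1k i₀
  have hq : p + (L i₀ : ZMod n) ∈ S := hg ▸ (gap_pos_and_mem hp).2
  have hqp : p + (L i₀ : ZMod n) ≠ p := fun h =>
    ZMod.natCast_ne_zero_of_lt (hL i₀) hLn (by simpa using h)
  have hi₀q : i₀ ∉ block L S (p + L i₀) := fun h =>
    hqp ((existsUnique_mem_block hL hsum hgen hface i₀).unique ⟨hq, h⟩
      ⟨hp, hb ▸ mem_singleton_self _⟩)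
  have hgq := sum_block_eq_gap hL hsum hface hq
  obtain ⟨i, hi⟩ : (block L S (p + L i₀)).Nonempty := by
    rw [nonempty_iff_ne_empty]
    rintro h
    rw [h, sum_empty] at hgq
    exact (gap_pos_and_mem hq).1.ne hgq
  have herase : block L (S.erase (p + L i₀)) p = insert i₀ (block L S (p + L i₀)) := by
    have hmerge := gap_erase hp (hg ▸ hLn)
    rw [hg] at hmerge
    exact block_eq hgen (by rw [hmerge, sum_insert hi₀q, hgq])
  refine ⟨hq, hqp, herase ▸ mem_insert_self _ _, fun h => ?_⟩
  have hii₀ : i = i₀ := mem_singleton.1 (h ▸ herase ▸ mem_insert_of_mem hi)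
  exact hi₀q (hii₀ ▸ hi)

lemma block_insert (hL : ∀ i, 0 < L i) (hsum : ∑ i, L i = n) (hgen : TonnGeneric k L)
    (hface : IsTonnFace n k L S) (hp : p ∈ S) (hi₀ : i₀ ∈ block L S p)
    (hb : block L S p ≠ {i₀}) :
    p + L i₀ ∉ S ∧ block L (insert (p + L i₀) S) p = {i₀} := by
  obtain ⟨i, hi, hii₀⟩ : ∃ i ∈ block L S p, i ≠ i₀ := by
    by_contra! h
    exact hb (eq_singleton_iff_unique_mem.2 ⟨hi₀, h⟩)
  have hlt : L i₀ < gap S p := by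
    rw [← sum_block_eq_gap hL hsum hface hp]
    calc L i₀ < L i₀ + L i := Nat.lt_add_of_pos_right (hL i)
      _ = ∑ j ∈ {i₀, i}, L j := (sum_pair hii₀.symm).symm
      _ ≤ ∑ j ∈ block L S p, L j := sum_le_sum_of_subset (insert_subset hi₀ (by simpa using hi))
  refine ⟨add_notMem_of_lt_gap (hL i₀) hlt, block_eq hgen ?_⟩
  rw [sum_singleton, gap_insert hp (hL i₀) hlt]

lemma toggle_spec (hL : ∀ i, 0 < L i) (hsum : ∑ i, L i = n) (hgen : TonnGeneric k L)
    (h1k : 1 < k) (hface : IsTonnFace n k L S) :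
    IsTonnFace n k L (toggle L i₀ S) ∧ toggle L i₀ (toggle L i₀ S) = S ∧
      ((toggle L i₀ S).card + 1 = S.card ∨ (toggle L i₀ S).card = S.card + 1) := by
  obtain ⟨hp, hi₀⟩ := pivot_spec (i₀ := i₀) hL hsum hgen hface
  set p := pivot L i₀ S
  by_cases hb : block L S p = {i₀}
  · obtain ⟨hq, hqp, hi₀', hb'⟩ := block_erase hL hsum hgen h1k hface hp hb
    have hp' : p ∈ S.erase (p + L i₀) := mem_erase.2 ⟨hqp.symm, hp⟩
    have hface' : IsTonnFace n k L (S.erase (p + L i₀)) := by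
      obtain ⟨-, x, σ, hsub⟩ := hface
      exact ⟨⟨p, hp'⟩, x, σ, (erase_subset _ _).trans hsub⟩
    have ht : toggle L i₀ S = S.erase (p + L i₀) := if_pos hb
    have hpiv := pivot_eq hL hsum hgen hface' hp' hi₀'
    refine ⟨ht ▸ hface', ?_, Or.inl (ht ▸ card_erase_add_one hq)⟩
    rw [ht, toggle, hpiv, if_neg hb', insert_erase hq]
  · obtain ⟨hq, hb'⟩ := block_insert hL hsum hgen hface hp hi₀ hb
    have hface' := isTonnFace_insert hL hsum hgen h1k hface hp hi₀
    have ht : toggle L i₀ S = insert (p + L i₀) S := if_neg hb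
    have hpiv := pivot_eq hL hsum hgen hface' (mem_insert_of_mem hp) (hb' ▸ mem_singleton_self _)
    refine ⟨ht ▸ hface', ?_, Or.inr (ht ▸ card_insert_of_notMem hq)⟩
    rw [ht, toggle, hpiv, if_pos hb', erase_insert hq]

end Toggle

lemma card_mem_Icc_of_isTonnFace {n k : ℕ} {L : Fin k → ℕ} {S : Finset (ZMod n)}
    (hface : IsTonnFace n k L S) : S.card ∈ Icc 1 k := by
  obtain ⟨hne, x, σ, hsub⟩ := hface
  refine mem_Icc.2 ⟨card_pos.2 hne, (card_le_card hsub).trans ?_⟩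
  exact card_image_le.trans (card_fin k).le

lemma sum_neg_one_pow_card_faces {n k : ℕ} [NeZero n] {L : Fin k → ℕ}
    [DecidablePred (IsTonnFace n k L)] (hL : ∀ i, 0 < L i) (hsum : ∑ i, L i = n)
    (hgen : TonnGeneric k L) (h1k : 1 < k) :
    ∑ S ∈ univ.filter (IsTonnFace n k L), (-1 : ℤ) ^ S.card = 0 := by
  have hspec := fun S (hS : S ∈ univ.filter (IsTonnFace n k L)) =>
    toggle_spec (i₀ := ⟨0, by omega⟩) hL hsum hgen h1k (mem_filter.1 hS).2
  exact sum_neg_one_pow_card_eq_zero_of_involution _ _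
    (fun S hS => mem_filter.2 ⟨mem_univ _, (hspec S hS).1⟩) (fun S hS => (hspec S hS).2.1)
    fun S hS => (hspec S hS).2.2

end Tonnetz

open Tonnetz

theorem stmt_2_general (n k : ℕ) (hk : 2 ≤ k)
    (L : Fin k → ℕ) (hL : ∀ i, 0 < L i) (hsum : ∑ i, L i = n)
    (hgen : TonnGeneric k L) :
    ∑ m ∈ Finset.Icc 1 k, (-1 : ℤ) ^ (m - 1) *
      (Set.ncard {S : Finset (ZMod n) | IsTonnFace n k L S ∧ S.card = m} : ℤ) = 0 := by
  classical
  have : NeZero n := ⟨Nat.ne_zero_of_lt (apply_lt_of_sum_eq hL hsum hk ⟨0, by omega⟩)⟩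
  have hsign : ∀ m ∈ Icc 1 k, (-1 : ℤ) ^ (m - 1) = -(-1) ^ m := fun m hm => by
    obtain ⟨j, rfl⟩ : ∃ j, m = j + 1 := ⟨m - 1, by grind⟩
    simp [pow_succ]
  rw [sum_congr rfl fun m hm => by rw [hsign m hm],
    sum_mul_ncard_eq_sum_filter _ card _ (fun S => card_mem_Icc_of_isTonnFace) fun m => -(-1) ^ m,
    sum_neg_distrib, sum_neg_one_pow_card_faces hL hsum hgen hk, neg_zero]

theorem stmt_2 (n k : ℕ) (hn : 1 ≤ n) (hk : 2 ≤ k)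
    (L : Fin k → ℕ) (hL : ∀ i, 0 < L i) (hsum : ∑ i, L i = n)
    (hgen : TonnGeneric k L) :
    ∑ m ∈ Finset.Icc 1 k, (-1 : ℤ) ^ (m - 1) *
      (Set.ncard {S : Finset (ZMod n) | IsTonnFace n k L S ∧ S.card = m} : ℤ) = 0 :=
  stmt_2_general n k hk L hL hsum hgen
end

section
/- Let p ≥ 1 and let j ∈ {0,1,…,p−1}. The map φ_j : ℤ/nℤ → ℤ/pnℤ sending the residue class of an integer v to the residue class of p·v + j is well defined and injective, and a subset S ⊆ ℤ/pnℤ all of whose elements are congruent to j modulo p is a face of Tonn^{p·n,k}(pL) if and only if S = φ_j(T) for some face T of Tonn^{n,k}(L). Consequently Tonn^{p·n,k}(pL) is the disjoint union of p subcomplexes, each isomorphic to Tonn^{n,k}(L). -/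
/-- The map `φ_j : ℤ/nℤ → ℤ/pnℤ` sending the class of `v` to the class of `p·v + j`. -/
def tonnPhi (n p j : ℕ) (v : ZMod n) : ZMod (p * n) :=
  ((p * v.val + j : ℕ) : ZMod (p * n))

section Aux

variable {n p j : ℕ} (hn : 1 ≤ n) (hp : 1 ≤ p) (hj : j < p)

include hn hj in
lemma tonnPhi_val (v : ZMod n) : (tonnPhi n p j v).val = p * v.val + j := by
  have : NeZero n := ⟨by omega⟩
  rw [tonnPhi, ZMod.val_natCast, Nat.mod_eq_of_lt]
  have := ZMod.val_lt v
  have h1 : p * (v.val + 1) = p * v.val + p := by ring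
  calc p * v.val + j < p * (v.val + 1) := by omega
    _ ≤ p * n := Nat.mul_le_mul_left p (by omega)

include hn in
lemma tonnPhi_add (v : ZMod n) (s : ℕ) :
    tonnPhi n p j (v + (s : ZMod n)) = tonnPhi n p j v + ((p * s : ℕ) : ZMod (p * n)) := by
  have : NeZero n := ⟨by omega⟩
  rw [tonnPhi, tonnPhi, ← Nat.cast_add, ZMod.natCast_eq_natCast_iff]
  have h1 : (v + (s : ZMod n)).val ≡ v.val + s [MOD n] := by
    rw [ZMod.val_add, ZMod.val_natCast]
    calc (v.val + s % n) % n ≡ v.val + s % n [MOD n] := (Nat.mod_modEq _ n)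
      _ ≡ v.val + s [MOD n] := Nat.ModEq.add_left _ (Nat.mod_modEq s n)
  calc p * (v + (s : ZMod n)).val + j ≡ p * (v.val + s) + j [MOD p * n] :=
        (h1.mul_left' p).add_right j
    _ = p * v.val + j + p * s := by ring

include hn in
lemma tonnDelta_image {k : ℕ} (L : Fin k → ℕ) (x : ZMod n) (σ : Equiv.Perm (Fin k)) :
    tonnDelta (p * n) k (fun i => p * L i) (tonnPhi n p j x) σ =
      (tonnDelta n k L x σ).image (tonnPhi n p j) := by
  rw [tonnDelta, tonnDelta, Finset.image_image]
  refine Finset.image_congr fun a _ => ?_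
  simp only [Function.comp_apply]
  rw [tonnPhi_add hn, Finset.mul_sum]

include hn hp hj in
lemma tonnPhi_inj : Function.Injective (tonnPhi n p j) := by
  have : NeZero n := ⟨by omega⟩
  intro v w h
  have hv := congrArg ZMod.val h
  rw [tonnPhi_val hn hj, tonnPhi_val hn hj] at hv
  have hvv : p * v.val = p * w.val := by omega
  exact ZMod.val_injective n (Nat.eq_of_mul_eq_mul_left hp hvv)

end Aux

theorem stmt_5 (n k p j : ℕ) (hn : 1 ≤ n) (hk : 1 ≤ k) (hp : 1 ≤ p) (hj : j < p)
    (L : Fin k → ℕ) (hL : ∀ i, 0 < L i) (hsum : ∑ i, L i = n) :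
    Function.Injective (tonnPhi n p j) ∧
    ∀ S : Finset (ZMod (p * n)),
      (∀ u ∈ S, ZMod.castHom (dvd_mul_right p n) (ZMod p) u = (j : ZMod p)) →
      (IsTonnFace (p * n) k (fun i => p * L i) S ↔
        ∃ T : Finset (ZMod n), IsTonnFace n k L T ∧ S = T.image (tonnPhi n p j)) := by
  have hn0 : 0 < n := hn
  have hp0 : 0 < p := hp
  have : NeZero n := ⟨by omega⟩
  have : NeZero p := ⟨by omega⟩
  have : NeZero (p * n) := ⟨by positivity⟩
  -- the class of u mod p is given by u.val % p
  have hcast : ∀ u : ZMod (p * n),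
      ZMod.castHom (dvd_mul_right p n) (ZMod p) u = (j : ZMod p) ↔ u.val % p = j := by
    intro u
    rw [ZMod.castHom_apply, ← ZMod.natCast_val, ZMod.natCast_eq_natCast_iff]
    unfold Nat.ModEq
    rw [Nat.mod_eq_of_lt hj]
  set ψ : ZMod (p * n) → ZMod n := fun u => ((u.val / p : ℕ) : ZMod n) with hψ
  have hψφ : ∀ v : ZMod n, ψ (tonnPhi n p j v) = v := by
    intro v
    show ((((tonnPhi n p j v).val / p : ℕ)) : ZMod n) = v
    rw [tonnPhi_val hn hj, Nat.mul_add_div hp0, Nat.div_eq_of_lt hj, Nat.add_zero,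
      ZMod.natCast_val, ZMod.cast_id]
  have hφψ : ∀ u : ZMod (p * n), u.val % p = j → tonnPhi n p j (ψ u) = u := by
    intro u hu
    have hlt : u.val / p < n := by
      have := ZMod.val_lt u
      exact Nat.div_lt_of_lt_mul (by omega)
    show (((p * ((u.val / p : ℕ) : ZMod n).val + j : ℕ)) : ZMod (p * n)) = u
    rw [ZMod.val_natCast, Nat.mod_eq_of_lt hlt]
    have : p * (u.val / p) + j = u.val := by
      conv_rhs => rw [← Nat.div_add_mod u.val p]
      omega
    rw [this, ZMod.natCast_val, ZMod.cast_id]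
  refine ⟨tonnPhi_inj hn hp hj, fun S hS => ?_⟩
  constructor
  · rintro ⟨hne, x, σ, hsub⟩
    obtain ⟨u, hu⟩ := hne
    -- x ≡ j mod p
    have hxj : x.val % p = j := by
      obtain ⟨a, _, ha⟩ := Finset.mem_image.mp (hsub hu)
      have := (hcast u).mp (hS u hu)
      have hux : u.val % p = (x + ((∑ i ∈ Finset.univ.filter (· < a), p * L (σ i) : ℕ) :
          ZMod (p * n))).val % p := by rw [ha]
      rw [ZMod.val_add, Nat.mod_mod_of_dvd _ (dvd_mul_right p n), Nat.add_mod,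
        ZMod.val_natCast, Nat.mod_mod_of_dvd _ (dvd_mul_right p n), ← Finset.mul_sum,
        Nat.mul_mod_right, Nat.add_zero, Nat.mod_mod_of_dvd _ dvd_rfl] at hux
      omega
    have hx : tonnPhi n p j (ψ x) = x := hφψ x hxj
    rw [← hx, tonnDelta_image hn] at hsub
    refine ⟨S.image ψ, ⟨⟨⟨ψ u, Finset.mem_image_of_mem ψ hu⟩, ψ x, σ, ?_⟩, ?_⟩⟩
    · intro t ht
      obtain ⟨w, hw, rfl⟩ := Finset.mem_image.mp ht
      obtain ⟨t', ht', hwt⟩ := Finset.mem_image.mp (hsub hw)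
      rw [← hwt, hψφ]
      exact ht'
    · rw [Finset.image_image]
      refine ((Finset.image_congr fun w hw => ?_).trans Finset.image_id).symm
      exact hφψ w ((hcast w).mp (hS w hw))
  · rintro ⟨T, ⟨hTne, x, σ, hT⟩, rfl⟩
    refine ⟨hTne.image _, tonnPhi n p j x, σ, ?_⟩
    rw [tonnDelta_image hn]
    exact Finset.image_subset_image hT
end

section
/- Suppose L is generic and k ≥ 2. If {u,v} is a 2-element face of Tonn^{n,k}(L) (with u ≠ v), then there is a unique nonempty proper subset I ⊆ {1,…,k} such that v − u equals the image of ∑_{i∈I} l_i in ℤ/nℤ (the L-type of the oriented edge from u to v). -/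
theorem stmt_6 (n k : ℕ) (hn : 1 ≤ n) (hk : 2 ≤ k)
    (L : Fin k → ℕ) (hL : ∀ i, 0 < L i) (hsum : ∑ i, L i = n)
    (hgen : TonnGeneric k L)
    (u v : ZMod n) (huv : u ≠ v) (hface : IsTonnFace n k L {u, v}) :
    ∃! I : Finset (Fin k),
      I.Nonempty ∧ I ≠ Finset.univ ∧ v - u = ((∑ i ∈ I, L i : ℕ) : ZMod n) := by
  haveI : NeZero n := ⟨by omega⟩
  have hlt : ∀ I : Finset (Fin k), I ≠ Finset.univ → (∑ i ∈ I, L i) < n := by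
    intro I hI
    rw [← hsum]
    obtain ⟨i, hi⟩ : ∃ i, i ∉ I := by
      by_contra h; push_neg at h; exact hI (Finset.eq_univ_of_forall h)
    exact Finset.sum_lt_sum_of_subset (Finset.subset_univ I) (Finset.mem_univ i) hi (hL i)
      (fun j _ _ => Nat.zero_le _)
  have huniq : ∀ I J : Finset (Fin k), I ≠ Finset.univ → J ≠ Finset.univ →
      ((∑ i ∈ I, L i : ℕ) : ZMod n) = ((∑ i ∈ J, L i : ℕ) : ZMod n) → I = J := by
    intro I J hI hJ h
    apply hgen
    have := congrArg ZMod.val h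
    rwa [ZMod.val_natCast_of_lt (hlt I hI), ZMod.val_natCast_of_lt (hlt J hJ)] at this
  obtain ⟨-, x, σ, hsub⟩ := hface
  have hu : u ∈ tonnDelta n k L x σ := hsub (by simp)
  have hv : v ∈ tonnDelta n k L x σ := hsub (by simp)
  simp only [tonnDelta, Finset.mem_image, Finset.mem_univ, true_and] at hu hv
  obtain ⟨j₁, hj₁⟩ := hu
  obtain ⟨j₂, hj₂⟩ := hv
  set F : Fin k → Finset (Fin k) := fun j => Finset.univ.filter (· < j) with hF
  -- key: for p < q, difference of partial sums equals sum over the image of the gap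
  have key : ∀ p q : Fin k, p < q →
      ((∑ i ∈ F q, L (σ i) : ℕ) : ZMod n) - ((∑ i ∈ F p, L (σ i) : ℕ) : ZMod n)
        = ((∑ i ∈ (F q \ F p).image σ, L i : ℕ) : ZMod n) := by
    intro p q hpq
    have hsubF : F p ⊆ F q := by
      intro i hi
      simp only [hF, Finset.mem_filter, Finset.mem_univ, true_and] at hi ⊢
      exact lt_trans hi hpq
    rw [Finset.sum_image (fun a _ b _ h => σ.injective h)]
    have := Finset.sum_sdiff (f := fun i => L (σ i)) hsubF
    have hcast := congrArg (fun m : ℕ => (m : ZMod n)) this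
    push_cast at hcast ⊢
    linear_combination -hcast
  have hgap : ∀ p q : Fin k, p < q →
      ((F q \ F p).image σ).Nonempty ∧ (F q \ F p).image σ ≠ Finset.univ := by
    intro p q hpq
    constructor
    · exact ⟨σ p, Finset.mem_image_of_mem _ (by
        simp [hF, Finset.mem_sdiff, hpq, lt_irrefl])⟩
    · intro h
      have : σ q ∈ (F q \ F p).image σ := h ▸ Finset.mem_univ _
      obtain ⟨i, hi, hi2⟩ := Finset.mem_image.mp this
      have : i = q := σ.injective hi2
      subst this
      simp [hF, Finset.mem_sdiff] at hi
  rcases lt_trichotomy j₁ j₂ with hlt12 | heq | hlt21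
  · refine ⟨(F j₂ \ F j₁).image σ, ⟨(hgap _ _ hlt12).1, (hgap _ _ hlt12).2, ?_⟩, ?_⟩
    · rw [← hj₁, ← hj₂, ← key _ _ hlt12]; ring
    · rintro J ⟨-, hJ2, hJ3⟩
      refine huniq J _ hJ2 (hgap _ _ hlt12).2 ?_
      rw [← hJ3, ← hj₁, ← hj₂, ← key _ _ hlt12]; ring
  · subst heq; exact absurd (hj₁.symm.trans hj₂) huv
  · -- j₂ < j₁ : take complement of the gap image
    set I' := (F j₁ \ F j₂).image σ with hI'
    set I := Finset.univ \ I' with hIdef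
    have hInon : I.Nonempty := by
      refine ⟨σ j₁, ?_⟩
      simp only [hIdef, Finset.mem_sdiff, Finset.mem_univ, true_and, hI']
      intro h
      obtain ⟨i, hi, hi2⟩ := Finset.mem_image.mp h
      have : i = j₁ := σ.injective hi2
      subst this
      simp [hF, Finset.mem_sdiff] at hi
    have hIne : I ≠ Finset.univ := by
      intro h
      have hmem : σ j₂ ∈ I' := Finset.mem_image_of_mem _ (by
        simp [hF, Finset.mem_sdiff, hlt21, lt_irrefl])
      have : σ j₂ ∈ I := h ▸ Finset.mem_univ _
      simp only [hIdef, Finset.mem_sdiff] at this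
      exact this.2 hmem
    have hcompl : ((∑ i ∈ I, L i : ℕ) : ZMod n) = -((∑ i ∈ I', L i : ℕ) : ZMod n) := by
      have := Finset.sum_sdiff (f := L) (I'.subset_univ)
      rw [hsum] at this
      have hcast := congrArg (fun m : ℕ => (m : ZMod n)) this
      push_cast at hcast
      rw [ZMod.natCast_self] at hcast
      rw [hIdef]
      push_cast
      linear_combination hcast
    have heqI : v - u = ((∑ i ∈ I, L i : ℕ) : ZMod n) := by
      rw [hcompl, hI', ← key _ _ hlt21, ← hj₁, ← hj₂]; ring
    exact ⟨I, ⟨hInon, hIne, heqI⟩, fun J hJ => huniq J I hJ.2.1 hIne (hJ.2.2 ▸ heqI)⟩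
end

section
/- If L is generic and reduced, then the simple graph on vertex set ℤ/nℤ in which two distinct elements u, v are adjacent exactly when {u,v} is a face of Tonn^{n,k}(L) is connected. -/
/-- The 1-skeleton of `Tonn^{n,k}(L)`: the simple graph on `ℤ/nℤ` where two
distinct vertices are adjacent exactly when they form a 2-element face. -/
def tonnGraph (n k : ℕ) (L : Fin k → ℕ) : SimpleGraph (ZMod n) where
  Adj u v := u ≠ v ∧ IsTonnFace n k L {u, v}
  symm := by
    constructor
    intro u v h
    exact ⟨h.1.symm, by rw [Finset.pair_comm]; exact h.2⟩
  loopless := by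
    constructor
    intro u h
    exact h.1 rfl

/-!
Translation by `c` maps `Δ(x;σ)` onto `Δ(x+c;σ)`, so the graph is invariant under translations
and the vertices reachable from `0` form an additive subgroup. Putting `l_i` first in `σ` shows
`0 ~ l_i`, so this subgroup contains every `l_i`, hence by Bézout also `gcd(l_1,…,l_k) = 1`,
which generates `ℤ/nℤ`.
-/

theorem SimpleGraph.connected_of_adj_add {A : Type*} [AddGroup A] (G : SimpleGraph A)
    (hG : ∀ c u v, G.Adj u v → G.Adj (u + c) (v + c)) {s : Set A}
    (hs : AddSubgroup.closure s = ⊤) (hreach : ∀ a ∈ s, G.Reachable 0 a) : G.Connected := by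
  have reachable_add (c : A) {u v : A} (h : G.Reachable u v) : G.Reachable (u + c) (v + c) :=
    h.map (⟨(· + c), hG c _ _⟩ : G →g G)
  let component : AddSubgroup A :=
    { carrier := {a | G.Reachable 0 a}
      zero_mem' := .rfl
      add_mem' := fun {a b} ha hb => hb.trans <| by simpa using reachable_add b ha
      neg_mem' := fun {a} ha => by simpa using (reachable_add (-a) ha).symm }
  have hall (a : A) : G.Reachable 0 a := by
    have : s ⊆ component := hreach
    exact (AddSubgroup.closure_le component).2 this (hs ▸ AddSubgroup.mem_top a)
  exact ⟨fun u v => (hall u).symm.trans (hall v)⟩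

theorem natCast_gcd_mem {R : Type*} [Ring R] (H : AddSubgroup R) {a b : ℕ}
    (ha : (a : R) ∈ H) (hb : (b : R) ∈ H) : ((a.gcd b : ℕ) : R) ∈ H := by
  have bezout : ((a.gcd b : ℕ) : R) = a.gcdA b • (a : R) + a.gcdB b • (b : R) := by
    simpa [zsmul_eq_mul, mul_comm] using congrArg (Int.cast : ℤ → R) (Nat.gcd_eq_gcd_ab a b)
  rw [bezout]
  exact add_mem (zsmul_mem ha _) (zsmul_mem hb _)

theorem natCast_finset_gcd_mem {R ι : Type*} [Ring R] (H : AddSubgroup R) (s : Finset ι)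
    (f : ι → ℕ) (hf : ∀ i ∈ s, (f i : R) ∈ H) : ((s.gcd f : ℕ) : R) ∈ H := by
  classical
  induction s using Finset.induction_on with
  | empty => simp
  | insert i s _ ih =>
    rw [Finset.gcd_insert]
    exact natCast_gcd_mem H (hf i (s.mem_insert_self i))
      (ih fun j hj => hf j (Finset.mem_insert_of_mem hj))

theorem ZMod.closure_range_natCast_eq_top {n : ℕ} {ι : Type*} [Fintype ι] (f : ι → ℕ)
    (hf : Finset.univ.gcd f = 1) :
    AddSubgroup.closure (Set.range fun i => (f i : ZMod n)) = ⊤ := by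
  rw [eq_top_iff]
  intro x _
  have hone : (1 : ZMod n) ∈ AddSubgroup.closure (Set.range fun i => (f i : ZMod n)) := by
    simpa [hf] using natCast_finset_gcd_mem _ Finset.univ f
      fun i _ => AddSubgroup.subset_closure (Set.mem_range_self i)
  simpa [ZMod.intCast_zmod_cast] using zsmul_mem hone (x.cast : ℤ)

section Tonnetz

variable {n k : ℕ} {L : Fin k → ℕ}

theorem add_mem_tonnDelta {x w : ZMod n} {σ : Equiv.Perm (Fin k)}
    (hw : w ∈ tonnDelta n k L x σ) (c : ZMod n) : w + c ∈ tonnDelta n k L (x + c) σ := by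
  simp only [tonnDelta, Finset.mem_image, Finset.mem_univ, true_and] at hw ⊢
  obtain ⟨j, rfl⟩ := hw
  exact ⟨j, by ring⟩

theorem tonnGraph_adj_add (c u v : ZMod n) (h : (tonnGraph n k L).Adj u v) :
    (tonnGraph n k L).Adj (u + c) (v + c) := by
  obtain ⟨hne, -, x, σ, hsub⟩ := h
  rw [Finset.insert_subset_iff, Finset.singleton_subset_iff] at hsub
  refine ⟨by simpa using hne, Finset.insert_nonempty _ _, x + c, σ, ?_⟩
  rw [Finset.insert_subset_iff, Finset.singleton_subset_iff]
  exact ⟨add_mem_tonnDelta hsub.1 c, add_mem_tonnDelta hsub.2 c⟩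

theorem tonnGraph_adj_add_natCast (hk : 1 < k) (x : ZMod n) (i : Fin k)
    (hi : ((L i : ℕ) : ZMod n) ≠ 0) : (tonnGraph n k L).Adj x (x + (L i : ZMod n)) := by
  let first : Fin k := ⟨0, by omega⟩
  let second : Fin k := ⟨1, hk⟩
  have before_first : Finset.univ.filter (· < first) = ∅ := by
    ext m
    simp [first, Fin.lt_def]
  have before_second : Finset.univ.filter (· < second) = {first} := by
    ext m
    simp only [Finset.mem_filter, Finset.mem_univ, true_and, Finset.mem_singleton, second,
      first, Fin.lt_def, Fin.ext_iff]
    omega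
  refine ⟨fun h => hi (left_eq_add.mp h), Finset.insert_nonempty _ _, x,
    Equiv.swap first i, ?_⟩
  simp only [Finset.insert_subset_iff, Finset.singleton_subset_iff, tonnDelta, Finset.mem_image,
    Finset.mem_univ, true_and]
  exact ⟨⟨first, by simp [before_first]⟩, ⟨second, by simp [before_second]⟩⟩

theorem tonnGraph_reachable_zero_natCast (hsum : ∑ i, L i = n) (i : Fin k) :
    (tonnGraph n k L).Reachable 0 (L i : ZMod n) := by
  by_cases hi : ((L i : ℕ) : ZMod n) = 0
  · rw [hi]
  have hk : 1 < k := by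
    by_contra! hk
    have : Subsingleton (Fin k) := Fin.subsingleton_iff_le_one.2 hk
    rw [Fintype.sum_subsingleton _ i] at hsum
    exact hi (by simp [hsum])
  simpa using (tonnGraph_adj_add_natCast hk 0 i hi).reachable

end Tonnetz

theorem stmt_7_general (n k : ℕ)
    (L : Fin k → ℕ) (hsum : ∑ i, L i = n)
    (hred : Finset.univ.gcd L = 1) :
    (tonnGraph n k L).Connected :=
  (tonnGraph n k L).connected_of_adj_add tonnGraph_adj_add
    (ZMod.closure_range_natCast_eq_top L hred)
    (by rintro _ ⟨i, rfl⟩; exact tonnGraph_reachable_zero_natCast hsum i)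

theorem stmt_7 (n k : ℕ) (hn : 1 ≤ n) (hk : 1 ≤ k)
    (L : Fin k → ℕ) (hL : ∀ i, 0 < L i) (hsum : ∑ i, L i = n)
    (hgen : TonnGeneric k L) (hred : Finset.univ.gcd L = 1) :
    (tonnGraph n k L).Connected :=
  stmt_7_general n k L hsum hred
end

section
/- Suppose L is generic and fix x ∈ ℤ/nℤ. The assignment sending an ordered partition (I_1, …, I_m) of {1,…,k} into nonempty blocks (m ≥ 1) to the set {x, x+μ(I_1), x+μ(I_1)+μ(I_2), …, x+μ(I_1)+⋯+μ(I_{m−1})} ⊆ ℤ/nℤ, where μ(I) is the image of ∑_{i∈I} l_i in ℤ/nℤ, is a bijection from the set of all ordered set partitions of {1,…,k} onto the set of faces of Tonn^{n,k}(L) that contain x. -/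
/-- An ordered set partition of `{1,…,k}`: a sequence `(I_1,…,I_m)` of pairwise
disjoint nonempty subsets whose union is the whole set. -/
structure OrderedSetPartition (k : ℕ) where
  parts : List (Finset (Fin k))
  nonempty : ∀ I ∈ parts, I.Nonempty
  pairwiseDisjoint : parts.Pairwise Disjoint
  cover : ∀ t : Fin k, ∃ I ∈ parts, t ∈ I

/-- The face of `Tonn^{n,k}(L)` associated with a base point `x` and an ordered
set partition `(I_1,…,I_m)`:
`{x, x+μ(I_1), x+μ(I_1)+μ(I_2), …, x+μ(I_1)+⋯+μ(I_{m−1})}`,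
where `μ(I)` is the image of `∑_{i∈I} l_i` in `ℤ/nℤ`. -/
def partitionFace (n k : ℕ) (L : Fin k → ℕ) (x : ZMod n)
    (P : OrderedSetPartition k) : Finset (ZMod n) :=
  (Finset.range P.parts.length).image
    (fun j => x + ((((P.parts.take j).map (fun I => ∑ t ∈ I, L t)).sum : ℕ) : ZMod n))


/-!
Both a maximal simplex `Δ(y;σ)` and the face of an ordered partition are translates of the set
of partial sums of a list of weights: of `(l_{σ(1)}, …, l_{σ(k)})`, resp. of the block weights
`(μ(I_1), …, μ(I_m))`. As the total weight is `n ≡ 0`, rotating `σ` shows that a face containing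
`x` lies in some `Δ(x;τ)`; a subset of `Δ(x;τ)` containing `x` is a set of cut points of the word
`τ(1) ⋯ τ(k)` containing `0`, i.e. an ordered partition into consecutive blocks. For injectivity,
the partial sums of the block weights lie in `[0, n)`, so the face determines them; a list of
positive numbers is determined by its partial sums, and genericity recovers each block from its
weight.
-/

namespace List

/-- Unlike `List.partialSums`, this omits the full sum and forgets the order. -/
def prefixSums (l : List ℕ) : Finset ℕ :=
  (Finset.range l.length).image fun j => (l.take j).sum

@[simp]
theorem mem_prefixSums {l : List ℕ} {m : ℕ} :
    m ∈ prefixSums l ↔ ∃ j < l.length, (l.take j).sum = m := by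
  simp [prefixSums]

theorem insert_sum_prefixSums (l : List ℕ) :
    insert l.sum (prefixSums l) = l.partialSums.toFinset := by
  ext m
  simp only [prefixSums, Finset.mem_insert, Finset.mem_image, Finset.mem_range, mem_toFinset,
    mem_iff_getElem, getElem_partialSums, length_partialSums, Nat.lt_succ_iff_lt_or_eq]
  constructor
  · rintro (rfl | ⟨j, hj, rfl⟩)
    · exact ⟨l.length, by omega, by rw [take_length]⟩
    · exact ⟨j, by omega, rfl⟩
  · rintro ⟨j, hj | rfl, rfl⟩
    · exact Or.inr ⟨j, hj, rfl⟩
    · exact Or.inl (by rw [take_length])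

theorem prefixSums_append_singleton (l : List ℕ) (a : ℕ) :
    prefixSums (l ++ [a]) = insert l.sum (prefixSums l) := by
  rw [prefixSums, length_append, length_singleton, Finset.range_add_one, Finset.image_insert,
    take_left' rfl, prefixSums]
  congr 1
  refine Finset.image_congr fun j hj => ?_
  rw [take_append_of_le_length (Finset.mem_range.mp hj).le]

theorem prefixSums_subset_range_sum {l : List ℕ} (hl : ∀ a ∈ l, 0 < a) :
    prefixSums l ⊆ Finset.range l.sum := by
  intro m hm
  obtain ⟨j, hj, rfl⟩ := Finset.mem_image.mp hm
  have hj : j < l.length := Finset.mem_range.mp hj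
  have hpos := hl _ (getElem_mem hj)
  have := sum_take_add_sum_drop l (j + 1)
  rw [sum_take_succ l j hj] at this
  exact Finset.mem_range.mpr (by omega)

theorem zero_mem_partialSums (l : List ℕ) : 0 ∈ l.partialSums := by
  cases l <;> simp [partialSums_cons, partialSums_nil]

theorem toFinset_partialSums_cons (a : ℕ) (l : List ℕ) :
    (a :: l).partialSums.toFinset = insert 0 (l.partialSums.toFinset.image (a + ·)) := by
  ext; simp [partialSums_cons]

theorem self_mem_image_add_toFinset_partialSums (a : ℕ) (l : List ℕ) :
    a ∈ l.partialSums.toFinset.image (a + ·) :=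
  Finset.mem_image.mpr ⟨0, mem_toFinset.mpr (zero_mem_partialSums l), add_zero a⟩

theorem toFinset_partialSums_cons_ne_singleton_zero {a : ℕ} (ha : 0 < a) (l : List ℕ) :
    (a :: l).partialSums.toFinset ≠ {0} := by
  intro h
  have hmem : a ∈ (a :: l).partialSums.toFinset := by
    rw [toFinset_partialSums_cons]
    exact Finset.mem_insert_of_mem (self_mem_image_add_toFinset_partialSums a l)
  rw [h, Finset.mem_singleton] at hmem
  exact ha.ne' hmem

theorem eq_and_eq_of_toFinset_partialSums_cons {a b : ℕ} {l l' : List ℕ} (ha : 0 < a)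
    (hb : 0 < b) (h : (a :: l).partialSums.toFinset = (b :: l').partialSums.toFinset) :
    a = b ∧ l.partialSums.toFinset = l'.partialSums.toFinset := by
  have hzero : ∀ c (s : Finset ℕ), 0 < c → 0 ∉ s.image (c + ·) := by
    intro c s hc; simp [hc.ne']
  rw [toFinset_partialSums_cons, toFinset_partialSums_cons] at h
  have himg := congrArg (·.erase 0) h
  simp only [Finset.erase_insert (hzero a _ ha), Finset.erase_insert (hzero b _ hb)] at himg
  have hab : a = b := by
    have h1 := self_mem_image_add_toFinset_partialSums a l
    have h2 := self_mem_image_add_toFinset_partialSums b l'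
    rw [himg] at h1; rw [← himg] at h2
    obtain ⟨_, -, h1⟩ := Finset.mem_image.mp h1
    obtain ⟨_, -, h2⟩ := Finset.mem_image.mp h2
    omega
  subst hab
  exact ⟨rfl, Finset.image_injective (add_right_injective a) himg⟩

theorem eq_of_toFinset_partialSums_eq {l l' : List ℕ} (hl : ∀ a ∈ l, 0 < a)
    (hl' : ∀ a ∈ l', 0 < a) (h : l.partialSums.toFinset = l'.partialSums.toFinset) :
    l = l' := by
  induction l generalizing l' with
  | nil =>
    cases l' with
    | nil => rfl
    | cons b l' =>
      simp only [partialSums_nil, toFinset_cons, toFinset_nil, insert_empty_eq] at h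
      exact absurd h.symm (toFinset_partialSums_cons_ne_singleton_zero (hl' b mem_cons_self) l')
  | cons a l ih =>
    cases l' with
    | nil =>
      simp only [partialSums_nil, toFinset_cons, toFinset_nil, insert_empty_eq] at h
      exact absurd h (toFinset_partialSums_cons_ne_singleton_zero (hl a mem_cons_self) l)
    | cons b l' =>
      obtain ⟨rfl, htail⟩ :=
        eq_and_eq_of_toFinset_partialSums_cons (hl a mem_cons_self) (hl' b mem_cons_self) h
      rw [ih (fun c hc => hl c (mem_cons_of_mem _ hc)) (fun c hc => hl' c (mem_cons_of_mem _ hc))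
        htail]

theorem prefixSums_map_sum (ls : List (List ℕ)) :
    prefixSums (ls.map sum) =
      (prefixSums (ls.map length)).image fun j => (ls.flatten.take j).sum := by
  simp only [prefixSums, Finset.image_image, length_map]
  refine Finset.image_congr fun j _ => ?_
  simp only [Function.comp_apply, take_sum_flatten, sum_flatten, map_take]

theorem exists_flatten_eq_prefixSums_eq {α : Type*} {J : Finset ℕ} (c : List α)
    (hJ : J ⊆ Finset.range c.length) (h0 : 0 ∈ J) :
    ∃ ls : List (List α), (∀ b ∈ ls, b ≠ []) ∧ ls.flatten = c ∧ prefixSums (ls.map length) = J := by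
  induction J using Finset.induction_on_max generalizing c with
  | empty => simp at h0
  | insert a J hlt ih =>
    have ha : a < c.length := Finset.mem_range.mp (hJ (Finset.mem_insert_self a J))
    rcases J.eq_empty_or_nonempty with rfl | hJne
    · obtain rfl : 0 = a := by simpa using h0
      refine ⟨[c], by simpa [← length_pos_iff] using ha, flatten_singleton, ?_⟩
      simp [prefixSums]
    · have h0J : 0 ∈ J := by
        rcases Finset.mem_insert.mp h0 with h | h
        · obtain ⟨b, hb⟩ := hJne; exact absurd (h ▸ hlt b hb) (Nat.not_lt_zero b)
        · exact h
      have hJa : J ⊆ Finset.range (c.take a).length := fun b hb => by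
        simpa [ha.le] using hlt b hb
      obtain ⟨ls, hne, hflat, hcuts⟩ := ih (c.take a) hJa h0J
      refine ⟨ls ++ [c.drop a], ?_, by simp [hflat], ?_⟩
      · simp only [mem_append, mem_singleton, or_imp, forall_and, forall_eq]
        exact ⟨hne, by simpa [← length_pos_iff] using ha⟩
      · rw [map_append, map_singleton, prefixSums_append_singleton, ← length_flatten, hflat,
          length_take_of_le ha.le, hcuts]

theorem image_prefixSums_subset_rotate {G : Type*} [AddCommMonoidWithOne G] [DecidableEq G]
    (l : List ℕ) (hl : (l.sum : G) = 0) (y : G) {j : ℕ} (hj : j ≤ l.length) :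
    (prefixSums l).image (fun s : ℕ => y + (s : G)) ⊆
      (prefixSums (l.rotate j)).image (fun s : ℕ => y + ((l.take j).sum : G) + s) := by
  intro z hz
  simp only [Finset.mem_image, mem_prefixSums, rotate_eq_drop_append_take hj] at hz ⊢
  obtain ⟨_, ⟨i, hi, rfl⟩, rfl⟩ := hz
  have hlen : (l.drop j ++ l.take j).length = l.length := by simp; omega
  have hdrop : (l.drop j).length = l.length - j := length_drop
  rcases le_or_gt j i with hji | hij
  · refine ⟨_, ⟨i - j, by omega, rfl⟩, ?_⟩
    rw [take_append_of_le_length (by simp; omega)]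
    conv_rhs => rw [← Nat.add_sub_cancel' hji, take_add, sum_append]
    rw [Nat.cast_add, add_assoc]
  · refine ⟨_, ⟨(l.drop j).length + i, by omega, rfl⟩, ?_⟩
    rw [take_length_add_append, take_take, min_eq_left hij.le, sum_append]
    have hsplit := congrArg (Nat.cast (R := G)) (sum_take_add_sum_drop l j)
    rw [Nat.cast_add] at hsplit
    rw [Nat.cast_add, ← add_assoc, add_assoc y, hsplit, hl, add_zero]

end List

open List in
theorem tonnDelta_eq_image_prefixSums (n k : ℕ) (L : Fin k → ℕ) (x : ZMod n)
    (σ : Equiv.Perm (Fin k)) :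
    tonnDelta n k L x σ = (prefixSums ((ofFn σ).map L)).image fun s : ℕ => x + (s : ZMod n) := by
  rw [tonnDelta, prefixSums, Finset.image_image, map_ofFn, length_ofFn, ← Finset.image_fin_univ,
    Finset.image_image]
  refine Finset.image_congr fun j _ => ?_
  simp [sum_take_ofFn]

theorem List.Perm.exists_ofFn_eq {k : ℕ} {c : List (Fin k)} (h : c.Perm (List.finRange k)) :
    ∃ σ : Equiv.Perm (Fin k), List.ofFn σ = c := by
  have hlen : c.length = k := h.length_eq.trans List.length_finRange
  have hnd : c.Nodup := h.nodup_iff.mpr (List.nodup_finRange k)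
  refine ⟨(finCongr hlen.symm).trans (hnd.getEquivOfForallMemList c
    fun t => h.mem_iff.mpr (List.mem_finRange t)), ?_⟩
  exact List.ext_getElem (by simp [hlen]) fun i _ _ => by simp

theorem List.perm_finRange_ofFn {k : ℕ} (σ : Equiv.Perm (Fin k)) :
    (List.ofFn σ).Perm (List.finRange k) := by
  rw [← List.ofFn_id]
  exact Equiv.Perm.ofFn_comp_perm σ id

namespace OrderedSetPartition

variable {k : ℕ}

theorem ext {P Q : OrderedSetPartition k} (h : P.parts = Q.parts) : P = Q := by
  cases P; cases Q; subst h; rfl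

def ofFlatten (ls : List (List (Fin k))) (hne : ∀ b ∈ ls, b ≠ [])
    (hperm : ls.flatten.Perm (List.finRange k)) : OrderedSetPartition k where
  parts := ls.map List.toFinset
  nonempty := by
    simpa [List.toFinset_nonempty_iff] using hne
  pairwiseDisjoint := by
    have hnd := (List.nodup_flatten.mp (hperm.nodup_iff.mpr (List.nodup_finRange k))).2
    exact List.pairwise_map.mpr (hnd.imp List.disjoint_toFinset_iff_disjoint.mpr)
  cover t := by
    obtain ⟨b, hb, htb⟩ := List.mem_flatten.mp (hperm.mem_iff.mpr (List.mem_finRange t))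
    exact ⟨b.toFinset, List.mem_map_of_mem hb, List.mem_toFinset.mpr htb⟩

theorem exists_ofFlatten_eq (P : OrderedSetPartition k) :
    ∃ ls hne hperm, ofFlatten ls hne hperm = P := by
  set ls := P.parts.map (·.sort (· ≤ ·))
  have hperm : ls.flatten.Perm (List.finRange k) := by
    refine (List.perm_ext_iff_of_nodup ?_ (List.nodup_finRange k)).mpr fun t => ?_
    · refine List.nodup_flatten.mpr ⟨?_, List.pairwise_map.mpr (P.pairwiseDisjoint.imp ?_)⟩
      · simp only [ls, List.mem_map]
        rintro _ ⟨I, -, rfl⟩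
        exact I.sort_nodup _
      · intro I J hIJ
        rw [← List.disjoint_toFinset_iff_disjoint, Finset.sort_toFinset, Finset.sort_toFinset]
        exact hIJ
    · obtain ⟨I, hI, htI⟩ := P.cover t
      simpa [ls] using ⟨I, hI, htI⟩
  refine ⟨ls, ?_, hperm, ext ?_⟩
  · simp only [ls, List.mem_map]
    rintro _ ⟨I, hI, rfl⟩
    rw [← List.toFinset_nonempty_iff, Finset.sort_toFinset]
    exact P.nonempty I hI
  · simp [ofFlatten, ls, Function.comp_def]

variable (L : Fin k → ℕ)

def blockSums (P : OrderedSetPartition k) : List ℕ :=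
  P.parts.map fun I => ∑ t ∈ I, L t

theorem blockSums_ofFlatten (ls : List (List (Fin k))) (hne : ∀ b ∈ ls, b ≠ [])
    (hperm : ls.flatten.Perm (List.finRange k)) :
    (ofFlatten ls hne hperm).blockSums L = ls.map fun b => (b.map L).sum := by
  have hnd := (List.nodup_flatten.mp (hperm.nodup_iff.mpr (List.nodup_finRange k))).1
  simp only [blockSums, ofFlatten, List.map_map]
  exact List.map_congr_left fun b hb => List.sum_toFinset L (hnd b hb)

theorem sum_blockSums (P : OrderedSetPartition k) : (P.blockSums L).sum = ∑ i, L i := by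
  obtain ⟨ls, hne, hperm, rfl⟩ := exists_ofFlatten_eq P
  rw [blockSums_ofFlatten, Fin.sum_univ_def, ← (hperm.map L).sum_eq, List.map_flatten,
    List.sum_flatten, List.map_map]
  rfl

theorem blockSums_pos (hL : ∀ i, 0 < L i) (P : OrderedSetPartition k) :
    ∀ a ∈ P.blockSums L, 0 < a := by
  simp only [blockSums, List.mem_map]
  rintro _ ⟨I, hI, rfl⟩
  obtain ⟨t, ht⟩ := P.nonempty I hI
  exact Finset.sum_pos' (fun _ _ => Nat.zero_le _) ⟨t, ht, hL t⟩

end OrderedSetPartition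

section Face

open List OrderedSetPartition

variable {n k : ℕ} (L : Fin k → ℕ) (x : ZMod n)

theorem partitionFace_eq_image_prefixSums (P : OrderedSetPartition k) :
    partitionFace n k L x P =
      (prefixSums (P.blockSums L)).image fun s : ℕ => x + (s : ZMod n) := by
  rw [partitionFace, prefixSums, Finset.image_image, blockSums, length_map]
  refine Finset.image_congr fun j _ => ?_
  simp [map_take]

theorem partitionFace_ofFlatten (ls : List (List (Fin k))) (hne : ∀ b ∈ ls, b ≠ [])
    (hperm : ls.flatten.Perm (finRange k)) :
    partitionFace n k L x (ofFlatten ls hne hperm) =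
      (prefixSums (ls.map length)).image
        fun j => x + (((ls.flatten.map L).take j).sum : ZMod n) := by
  have hsums : ls.map (fun b => (b.map L).sum) = (ls.map (map L)).map sum := by simp
  have hlengths : (ls.map (map L)).map length = ls.map length := by simp
  rw [partitionFace_eq_image_prefixSums, blockSums_ofFlatten, hsums, prefixSums_map_sum,
    hlengths, ← map_flatten, Finset.image_image]
  rfl

theorem mem_partitionFace_self (hk : 0 < k) (P : OrderedSetPartition k) :
    x ∈ partitionFace n k L x P := by
  obtain ⟨I, hI, -⟩ := P.cover ⟨0, hk⟩
  rw [partitionFace_eq_image_prefixSums]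
  refine Finset.mem_image.mpr ⟨0, mem_prefixSums.mpr ⟨0, ?_, rfl⟩, by simp⟩
  simpa [blockSums] using length_pos_of_mem hI

theorem partitionFace_subset_tonnDelta (P : OrderedSetPartition k) :
    ∃ σ, partitionFace n k L x P ⊆ tonnDelta n k L x σ := by
  obtain ⟨ls, hne, hperm, rfl⟩ := exists_ofFlatten_eq P
  obtain ⟨σ, hσ⟩ := hperm.exists_ofFn_eq
  refine ⟨σ, ?_⟩
  rw [partitionFace_ofFlatten, tonnDelta_eq_image_prefixSums, hσ, prefixSums.eq_1 (map L _),
    Finset.image_image]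
  apply Finset.image_subset_image
  rw [length_map, length_flatten]
  refine prefixSums_subset_range_sum ?_
  simpa [length_pos_iff] using hne

theorem injOn_add_natCast_range :
    Set.InjOn (fun s : ℕ => x + (s : ZMod n)) (Finset.range n) := by
  intro a ha b hb hab
  have hcast := (ZMod.natCast_eq_natCast_iff' a b n).mp (add_left_cancel hab)
  rwa [Nat.mod_eq_of_lt (Finset.mem_range.mp ha), Nat.mod_eq_of_lt (Finset.mem_range.mp hb)]
    at hcast

theorem partitionFace_injective (hL : ∀ i, 0 < L i) (hsum : ∑ i, L i = n)
    (hgen : TonnGeneric k L) : Function.Injective (partitionFace n k L x) := by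
  intro P Q hPQ
  have hrange : ∀ R : OrderedSetPartition k, prefixSums (R.blockSums L) ⊆ Finset.range n :=
    fun R => hsum ▸ sum_blockSums L R ▸ prefixSums_subset_range_sum (blockSums_pos L hL R)
  rw [partitionFace_eq_image_prefixSums, partitionFace_eq_image_prefixSums, ← Finset.coe_inj,
    Finset.coe_image, Finset.coe_image,
    (injOn_add_natCast_range x).image_eq_image_iff (hrange P) (hrange Q), Finset.coe_inj] at hPQ
  have hsums : P.blockSums L = Q.blockSums L := by
    refine eq_of_toFinset_partialSums_eq (blockSums_pos L hL P) (blockSums_pos L hL Q) ?_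
    rw [← insert_sum_prefixSums, ← insert_sum_prefixSums, hPQ, sum_blockSums, sum_blockSums]
  exact ext (map_injective_iff.mpr hgen hsums)

theorem exists_tonnDelta_superset_of_mem (hsum : ∑ i, L i = n) {y : ZMod n}
    {σ : Equiv.Perm (Fin k)} (hx : x ∈ tonnDelta n k L y σ) :
    ∃ τ, tonnDelta n k L y σ ⊆ tonnDelta n k L x τ := by
  rw [tonnDelta_eq_image_prefixSums] at hx
  obtain ⟨_, hs, rfl⟩ := Finset.mem_image.mp hx
  obtain ⟨j, hj, rfl⟩ := mem_prefixSums.mp hs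
  obtain ⟨τ, hτ⟩ := ((rotate_perm (ofFn σ) j).trans (perm_finRange_ofFn σ)).exists_ofFn_eq
  have hzero : ((((ofFn σ).map L).sum : ℕ) : ZMod n) = 0 := by
    rw [map_ofFn, sum_ofFn, Function.comp_def, Equiv.sum_comp σ L, hsum, ZMod.natCast_self]
  refine ⟨τ, ?_⟩
  rw [tonnDelta_eq_image_prefixSums, tonnDelta_eq_image_prefixSums, hτ, map_rotate]
  exact image_prefixSums_subset_rotate _ hzero y hj.le

theorem exists_partitionFace_eq_of_subset_tonnDelta (hk : 0 < k) {S : Finset (ZMod n)} {σ : Equiv.Perm (Fin k)}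
    (hS : S ⊆ tonnDelta n k L x σ) (hx : x ∈ S) : ∃ P, partitionFace n k L x P = S := by
  rw [tonnDelta_eq_image_prefixSums, prefixSums, Finset.image_image, length_map] at hS
  obtain ⟨J, hJ, rfl⟩ := Finset.subset_image_iff.mp hS
  have h0 : 0 ∈ Finset.range (ofFn σ).length := Finset.mem_range.mpr (by simpa using hk)
  obtain ⟨ls, hne, hflat, hcuts⟩ :=
    exists_flatten_eq_prefixSums_eq (ofFn σ) (Finset.insert_subset h0 hJ) (J.mem_insert_self 0)
  refine ⟨ofFlatten ls hne (hflat ▸ perm_finRange_ofFn σ), ?_⟩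
  rw [partitionFace_ofFlatten, hcuts, hflat, Finset.image_insert]
  exact Finset.insert_eq_of_mem (by simpa using hx)

end Face

theorem stmt_8_general (n k : ℕ) (hk : 1 ≤ k)
    (L : Fin k → ℕ) (hL : ∀ i, 0 < L i) (hsum : ∑ i, L i = n)
    (hgen : TonnGeneric k L) (x : ZMod n) :
    Set.BijOn (partitionFace n k L x) Set.univ
      {S : Finset (ZMod n) | IsTonnFace n k L S ∧ x ∈ S} := by
  refine ⟨fun P _ => ?_, (partitionFace_injective L x hL hsum hgen).injOn, ?_⟩
  · have hxP := mem_partitionFace_self L x hk P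
    exact ⟨⟨⟨x, hxP⟩, x, partitionFace_subset_tonnDelta L x P⟩, hxP⟩
  · rintro S ⟨⟨-, y, σ, hS⟩, hxS⟩
    obtain ⟨τ, hτ⟩ := exists_tonnDelta_superset_of_mem L x hsum (hS hxS)
    obtain ⟨P, hP⟩ := exists_partitionFace_eq_of_subset_tonnDelta L x hk (hS.trans hτ) hxS
    exact ⟨P, trivial, hP⟩

theorem stmt_8 (n k : ℕ) (hn : 1 ≤ n) (hk : 1 ≤ k)
    (L : Fin k → ℕ) (hL : ∀ i, 0 < L i) (hsum : ∑ i, L i = n)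
    (hgen : TonnGeneric k L) (x : ZMod n) :
    Set.BijOn (partitionFace n k L x) Set.univ
      {S : Finset (ZMod n) | IsTonnFace n k L S ∧ x ∈ S} :=
  stmt_8_general n k hk L hL hsum hgen x
end

section
/- Suppose L is generic. Let p : {1,…,k} → ℕ be a function that is not identically zero, such that p_j = 0 for some j, and such that n divides ∑_{i=1}^{k} p_i l_i. Then p_i ≥ 3 for some i ∈ {1,…,k}. -/
theorem stmt_12 (n k : ℕ) (hn : 1 ≤ n) (hk : 1 ≤ k)
    (L : Fin k → ℕ) (hL : ∀ i, 0 < L i) (hsum : ∑ i, L i = n)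
    (hgen : TonnGeneric k L)
    (p : Fin k → ℕ) (hp : p ≠ 0) (hpj : ∃ j, p j = 0)
    (hdvd : n ∣ ∑ i, p i * L i) :
    ∃ i, 3 ≤ p i := by
  by_contra h
  push_neg at h
  set A : Finset (Fin k) := Finset.univ.filter (fun i => 1 ≤ p i) with hA
  set B : Finset (Fin k) := Finset.univ.filter (fun i => 2 ≤ p i) with hB
  have hBA : B ⊆ A := by
    intro i hi
    rw [hB, Finset.mem_filter] at hi
    rw [hA, Finset.mem_filter]
    exact ⟨hi.1, by omega⟩
  have hsplit : ∑ i, p i * L i = ∑ i ∈ A, L i + ∑ i ∈ B, L i := by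
    rw [hA, hB, Finset.sum_filter, Finset.sum_filter, ← Finset.sum_add_distrib]
    apply Finset.sum_congr rfl
    intro i _
    have := h i
    interval_cases (p i) <;> simp <;> ring
  -- A is nonempty
  obtain ⟨i0, hi0⟩ : ∃ i, p i ≠ 0 := by
    by_contra hc
    push_neg at hc
    exact hp (funext hc)
  have hi0A : i0 ∈ A := by simp [hA]; omega
  -- complement of A is nonempty
  obtain ⟨j, hj⟩ := hpj
  have hjA : j ∈ Aᶜ := by simp [hA, hj]
  have hcompl : ∑ i ∈ A, L i + ∑ i ∈ Aᶜ, L i = n := by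
    rw [Finset.sum_add_sum_compl]; exact hsum
  have hcpos : 0 < ∑ i ∈ Aᶜ, L i :=
    Finset.sum_pos' (fun i _ => Nat.zero_le _) ⟨j, hjA, hL j⟩
  have hApos : 0 < ∑ i ∈ A, L i :=
    Finset.sum_pos' (fun i _ => Nat.zero_le _) ⟨i0, hi0A, hL i0⟩
  have hAlt : ∑ i ∈ A, L i < n := by omega
  have hBle : ∑ i ∈ B, L i ≤ ∑ i ∈ A, L i :=
    Finset.sum_le_sum_of_subset hBA
  have hSlt : ∑ i, p i * L i < 2 * n := by omega
  have hSpos : 0 < ∑ i, p i * L i := by omega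
  have hSeq : ∑ i, p i * L i = n := by
    obtain ⟨c, hc⟩ := hdvd
    have hc2 : c < 2 := Nat.lt_of_mul_lt_mul_left (a := n) (by omega)
    have hc0 : c ≠ 0 := by rintro rfl; omega
    have hc1 : c = 1 := by omega
    subst hc1
    omega
  have hBAc : ∑ i ∈ B, L i = ∑ i ∈ Aᶜ, L i := by omega
  have := hgen B Aᶜ hBAc
  have : j ∈ B := this ▸ hjA
  have := hBA this
  simp [hA, hj] at this
end

section
/- Suppose L is generic. Let p : {1,…,k} → ℕ be a function that is not identically zero, such that p_j = 0 for some j, and such that n divides ∑_{i=1}^{k} p_i l_i. Then for all subsets I, J ⊆ {1,…,k} one has ∑_{i=1}^{k} p_i a_i ≠ ∑_{i∈I} a_i − ∑_{j∈J} a_j (as vectors in ℤ^k). -/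
/-- The vector `a_i ∈ ℤ^k` whose `i`-th coordinate is `k−1` and whose other
coordinates are all `−1`. -/
def aVec (k : ℕ) (i : Fin k) : Fin k → ℤ :=
  fun t => if t = i then (k : ℤ) - 1 else -1

lemma sum_aVec_apply (k : ℕ) (I : Finset (Fin k)) (t : Fin k) :
    (∑ i ∈ I, aVec k i) t = (if t ∈ I then (k:ℤ) else 0) - I.card := by
  rw [Finset.sum_apply]
  have : ∀ i ∈ I, aVec k i t = (if i = t then (k:ℤ) else 0) - 1 := by
    intro i _; simp only [aVec]; by_cases h : t = i <;> simp [h, eq_comm] at *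
  rw [Finset.sum_congr rfl this, Finset.sum_sub_distrib, Finset.sum_ite_eq']
  simp [mul_comm]

lemma sum_smul_aVec_apply (k : ℕ) (p : Fin k → ℕ) (t : Fin k) :
    (∑ i : Fin k, (p i : ℤ) • aVec k i) t = (k:ℤ) * p t - ∑ i, (p i : ℤ) := by
  rw [Finset.sum_apply]
  have : ∀ i ∈ Finset.univ, ((p i : ℤ) • aVec k i) t
      = (if i = t then (k:ℤ) * p i else 0) - p i := by
    intro i _; simp only [Pi.smul_apply, smul_eq_mul, aVec]
    by_cases h : t = i <;> simp [h, eq_comm] <;> ring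
  rw [Finset.sum_congr rfl this, Finset.sum_sub_distrib, Finset.sum_ite_eq']
  simp

lemma sum_indicator_mul (k : ℕ) (I : Finset (Fin k)) (L : Fin k → ℕ) :
    (∑ i : Fin k, (if i ∈ I then (1:ℤ) else 0) * L i) = ∑ i ∈ I, (L i : ℤ) := by
  simp only [ite_mul, one_mul, zero_mul]
  rw [Finset.sum_ite_mem, Finset.univ_inter]

theorem stmt_13 (n k : ℕ) (hn : 1 ≤ n) (hk : 1 ≤ k)
    (L : Fin k → ℕ) (hL : ∀ i, 0 < L i) (hsum : ∑ i, L i = n)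
    (hgen : TonnGeneric k L)
    (p : Fin k → ℕ) (hp : p ≠ 0) (hpj : ∃ j, p j = 0)
    (hdvd : n ∣ ∑ i, p i * L i) :
    ∀ I J : Finset (Fin k),
      (∑ i : Fin k, (p i : ℤ) • aVec k i) ≠
        (∑ i ∈ I, aVec k i) - (∑ j ∈ J, aVec k j) := by
  intro I J h
  obtain ⟨j, hj⟩ := hpj
  have hk0 : (k:ℤ) ≠ 0 := by positivity
  -- coordinatewise equation
  have hco : ∀ t, (k:ℤ) * p t - ∑ i, (p i : ℤ) =
      ((if t ∈ I then (k:ℤ) else 0) - I.card) - ((if t ∈ J then (k:ℤ) else 0) - J.card) := by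
    intro t
    have := congrFun h t
    rwa [Pi.sub_apply, sum_smul_aVec_apply, sum_aVec_apply, sum_aVec_apply] at this
  -- p t = χ_I t - χ_J t + (χ_J j - χ_I j)
  have hP : ∀ t, (p t : ℤ) = (if t ∈ I then (1:ℤ) else 0) - (if t ∈ J then (1:ℤ) else 0)
      + ((if j ∈ J then (1:ℤ) else 0) - (if j ∈ I then (1:ℤ) else 0)) := by
    intro t
    have h1 := hco t
    have h2 := hco j
    rw [hj] at h2
    apply mul_left_cancel₀ hk0
    push_cast at h2 ⊢
    split_ifs at h1 h2 ⊢ <;> ring_nf <;> ring_nf at h1 h2 <;> linarith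
  -- weighted sum identity
  have hSL : (∑ i : Fin k, (p i : ℤ) * L i)
      = (∑ i ∈ I, (L i : ℤ)) - (∑ i ∈ J, (L i : ℤ))
        + ((if j ∈ J then (1:ℤ) else 0) - (if j ∈ I then (1:ℤ) else 0)) * n := by
    calc (∑ i : Fin k, (p i : ℤ) * L i)
        = ∑ i : Fin k, ((if i ∈ I then (1:ℤ) else 0) * L i - (if i ∈ J then (1:ℤ) else 0) * L i
            + ((if j ∈ J then (1:ℤ) else 0) - (if j ∈ I then (1:ℤ) else 0)) * L i) := by
          refine Finset.sum_congr rfl fun i _ => ?_; rw [hP i]; ring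
      _ = _ := by
          rw [Finset.sum_add_distrib, Finset.sum_sub_distrib, sum_indicator_mul,
            sum_indicator_mul, ← Finset.mul_sum]
          push_cast [← hsum]
          ring
  -- divisibility in ℤ
  have hdvdZ : (n:ℤ) ∣ (∑ i ∈ I, (L i : ℤ)) - (∑ i ∈ J, (L i : ℤ)) := by
    have h1 : (n:ℤ) ∣ ∑ i : Fin k, (p i : ℤ) * L i := by
      have := Int.natCast_dvd_natCast.mpr hdvd
      push_cast at this; exact this
    rw [hSL] at h1
    simpa using h1.sub
      (dvd_mul_left (n:ℤ) ((if j ∈ J then (1:ℤ) else 0) - (if j ∈ I then (1:ℤ) else 0)))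
  -- trichotomy on subset sums
  set A := ∑ i ∈ I, L i with hA
  set B := ∑ i ∈ J, L i with hB
  have hAc : (∑ i ∈ I, (L i : ℤ)) = (A : ℤ) := by push_cast [hA]; rfl
  have hBc : (∑ i ∈ J, (L i : ℤ)) = (B : ℤ) := by push_cast [hB]; rfl
  have hAn : A ≤ n := hsum ▸ Finset.sum_le_sum_of_subset (Finset.subset_univ I)
  have hBn : B ≤ n := hsum ▸ Finset.sum_le_sum_of_subset (Finset.subset_univ J)
  rw [hAc, hBc] at hdvdZ
  obtain ⟨m, hm⟩ := hdvdZ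
  have hn0 : (0:ℤ) < n := by exact_mod_cast hn
  have hm1 : m ≤ 1 := by
    by_contra hlt
    push_neg at hlt
    nlinarith [Int.natCast_nonneg B, Int.natCast_nonneg A,
      (Int.lt_iff_add_one_le).mp hlt, show (A:ℤ) ≤ n from by exact_mod_cast hAn]
  have hm2 : -1 ≤ m := by
    by_contra hlt
    push_neg at hlt
    nlinarith [Int.natCast_nonneg B, Int.natCast_nonneg A,
      show (B:ℤ) ≤ n from by exact_mod_cast hBn]
  -- in each case both characteristic differences cancel, forcing p = 0
  have hpz : ∀ t, p t = 0 := by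
    have : I = J ∨ (I = Finset.univ ∧ J = ∅) ∨ (I = ∅ ∧ J = Finset.univ) := by
      interval_cases m
      · right; right
        have hAB : A = 0 ∧ B = n := by
          have : (A:ℤ) - B = -n := by linarith [hm]
          constructor <;> omega
        exact ⟨hgen I ∅ (by simp [← hA, hAB.1]),
          hgen J Finset.univ (by rw [← hB, hAB.2, hsum])⟩
      · left
        refine hgen I J ?_
        have hab : (A:ℤ) = B := by linarith [hm]
        exact_mod_cast hab
      · right; left
        have hAB : A = n ∧ B = 0 := by
          have : (A:ℤ) - B = n := by linarith [hm]
          constructor <;> omega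
        exact ⟨hgen I Finset.univ (by rw [← hA, hAB.1, hsum]),
          hgen J ∅ (by simp [← hB, hAB.2])⟩
    intro t
    have hPt := hP t
    rcases this with rfl | ⟨rfl, rfl⟩ | ⟨rfl, rfl⟩
    · split_ifs at hPt <;> omega
    · simp only [Finset.mem_univ, Finset.notMem_empty, if_true, if_false] at hPt; omega
    · simp only [Finset.mem_univ, Finset.notMem_empty, if_true, if_false] at hPt; omega
  exact hp (funext fun t => hpz t)
end

section
/- Let k ≥ 1 and let c_1, …, c_k ∈ ℝ^{k−1} be vectors that span ℝ^{k−1} and satisfy c_1 + c_2 + ⋯ + c_k = 0. Let Z = [0,c_1] + [0,c_2] + ⋯ + [0,c_k] be the Minkowski sum of the line segments [0,c_i]. Then Z equals the union, over all permutations π of {1,…,k}, of the simplices Σ_π = conv{c_{π(1)}, c_{π(1)}+c_{π(2)}, …, c_{π(1)}+⋯+c_{π(k)}}. -/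
/-!
A point of the zonotope is `∑ tᵢ • cᵢ` with every `tᵢ ∈ [0, 1]`. Order the coefficients
decreasingly by a permutation `π`; since `∑ cᵢ = 0` they may all be shifted so that the largest
becomes `1`. Abel summation then writes the point as `∑ⱼ (Tⱼ - Tⱼ₊₁) • Sⱼ` with `Tₖ = 0`, a convex
combination of the prefix sums `Sⱼ` of `c ∘ π`. Conversely every prefix sum is a vertex of the
zonotope, which is convex.
-/

open Pointwise Finset

theorem sum_smul_sum_filter_le {ι R M : Type*} [Fintype ι] [LE ι] [DecidableLE ι] [Semiring R]
    [AddCommMonoid M] [Module R M] (w : ι → R) (d : ι → M) :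
    ∑ j, w j • ∑ i ∈ univ.filter (· ≤ j), d i = ∑ i, (∑ j ∈ univ.filter (i ≤ ·), w j) • d i := by
  simp only [smul_sum, sum_smul, sum_filter]
  rw [sum_comm]
  simp only [ite_smul, zero_smul, smul_ite, smul_zero]

theorem Fin.sum_Ici_snoc_zero {R : Type*} [AddCommGroup R] {n : ℕ} (T : Fin (n + 1) → R)
    (i : Fin (n + 1)) :
    ∑ j ∈ Ici i,
      ((Fin.snoc T 0 : Fin (n + 2) → R) j.castSucc - (Fin.snoc T 0 : Fin (n + 2) → R) j.succ) =
        T i := by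
  have h := Fin.sum_Icc_sub (le_last i) (Fin.snoc T 0 : Fin (n + 2) → R)
  rw [← Icc_top, Fin.top_eq_last, ← neg_inj, ← sum_neg_distrib]
  simpa using h

theorem Fin.antitone_snoc {α : Type*} [Preorder α] {n : ℕ} {T : Fin (n + 1) → α} {a : α}
    (hT : Antitone T) (ha : a ≤ T (Fin.last n)) : Antitone (Fin.snoc T a : Fin (n + 2) → α) := by
  refine Fin.antitone_iff_succ_le.2 fun i => ?_
  rcases Fin.eq_castSucc_or_eq_last i with ⟨j, rfl⟩ | rfl
  · rw [Fin.succ_castSucc, Fin.snoc_castSucc, Fin.snoc_castSucc]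
    exact hT (Fin.castSucc_le_succ j)
  · simpa using ha

theorem exists_perm_antitone_comp {α : Type*} [LinearOrder α] {k : ℕ} (t : Fin k → α) :
    ∃ π : Equiv.Perm (Fin k), Antitone (t ∘ π) :=
  ⟨Fin.revPerm.trans (Tuple.sort t), fun _ _ hij => Tuple.monotone_sort t (Fin.rev_le_rev.2 hij)⟩

section
variable {𝕜 E : Type*} [Field 𝕜] [LinearOrder 𝕜] [IsStrictOrderedRing 𝕜] [AddCommGroup E]
  [Module 𝕜 E]

theorem sum_smul_mem_convexHull_range_sum_filter_le {n : ℕ} {T : Fin (n + 1) → 𝕜}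
    (hT : Antitone T) (hlast : 0 ≤ T (Fin.last n)) (h0 : T 0 = 1) (d : Fin (n + 1) → E) :
    ∑ i, T i • d i ∈ convexHull 𝕜 (Set.range fun j => ∑ i ∈ univ.filter (· ≤ j), d i) := by
  set T' : Fin (n + 2) → 𝕜 := Fin.snoc T 0
  have htail : ∀ i, ∑ j ∈ univ.filter (i ≤ ·), (T' j.castSucc - T' j.succ) = T i := fun i => by
    rw [filter_le_eq_Ici]
    exact Fin.sum_Ici_snoc_zero T i
  rw [← sum_congr rfl fun i _ => congrArg (· • d i) (htail i), ← sum_smul_sum_filter_le]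
  refine (convex_convexHull 𝕜 _).sum_mem (fun j _ => ?_) ?_
    fun j _ => subset_convexHull 𝕜 _ ⟨j, rfl⟩
  · exact sub_nonneg.2 (Fin.antitone_snoc hT hlast (Fin.castSucc_le_succ j))
  · simpa [h0] using htail 0

theorem exists_eq_sum_smul_of_mem_sum_segment {ι : Type*} [Fintype ι] {c : ι → E} {x : E}
    (hx : x ∈ ∑ i, segment 𝕜 0 (c i)) :
    ∃ t : ι → 𝕜, (∀ i, t i ∈ Set.Icc 0 1) ∧ ∑ i, t i • c i = x := by
  obtain ⟨g, hg, rfl⟩ := (Set.mem_fintype_sum (fun i => segment 𝕜 0 (c i)) x).1 hx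
  simp only [segment_eq_image, smul_zero, zero_add] at hg
  choose t ht htg using hg
  exact ⟨t, ht, sum_congr rfl fun i _ => htg i⟩

theorem sum_mem_sum_segment_zero {ι : Type*} [Fintype ι] [DecidableEq ι] (s : Finset ι)
    (c : ι → E) :
    ∑ i ∈ s, c i ∈ ∑ i, segment 𝕜 0 (c i) := by
  rw [← Fintype.sum_ite_mem s c]
  refine Set.finsetSum_mem_finsetSum _ _ _ fun i _ => ?_
  split_ifs
  · exact right_mem_segment 𝕜 0 (c i)
  · exact left_mem_segment 𝕜 0 (c i)

theorem convexHull_range_sum_filter_le_subset_sum_segment {k : ℕ} (c : Fin k → E)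
    (π : Equiv.Perm (Fin k)) :
    convexHull 𝕜 (Set.range fun j => ∑ i ∈ univ.filter (· ≤ j), c (π i)) ⊆
      ∑ i, segment 𝕜 0 (c i) := by
  refine convexHull_min (Set.range_subset_iff.2 fun j => ?_)
    (convex_sum _ fun i _ => convex_segment 0 (c i))
  simpa only [sum_map, Equiv.coe_toEmbedding] using
    sum_mem_sum_segment_zero (𝕜 := 𝕜) ((univ.filter (· ≤ j)).map π.toEmbedding) c

theorem sum_segment_subset_iUnion_convexHull {n : ℕ} (c : Fin (n + 1) → E)
    (hsum : ∑ i, c i = 0) :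
    ∑ i, segment 𝕜 0 (c i) ⊆
      ⋃ π : Equiv.Perm (Fin (n + 1)),
        convexHull 𝕜 (Set.range fun j => ∑ i ∈ univ.filter (· ≤ j), c (π i)) := by
  intro x hx
  obtain ⟨t, ht, rfl⟩ := exists_eq_sum_smul_of_mem_sum_segment hx
  obtain ⟨π, hπ⟩ := exists_perm_antitone_comp t
  have hshift : ∑ i, t i • c i = ∑ i, (t (π i) + (1 - t (π 0))) • c (π i) := by
    simp only [add_smul, sum_add_distrib, ← smul_sum, Equiv.sum_comp π c, hsum, smul_zero, add_zero]
    exact (Equiv.sum_comp π _).symm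
  rw [hshift]
  have hlast : 0 ≤ t (π (Fin.last n)) + (1 - t (π 0)) := by
    linarith [(ht (π (Fin.last n))).1, (ht (π 0)).2]
  exact Set.mem_iUnion.2 ⟨π, sum_smul_mem_convexHull_range_sum_filter_le
    (T := fun i => t (π i) + (1 - t (π 0))) (fun i j hij => add_le_add_left (hπ hij) _) hlast
    (by ring) _⟩

theorem sum_segment_eq_iUnion_convexHull {n : ℕ} (c : Fin (n + 1) → E)
    (hsum : ∑ i, c i = 0) :
    ∑ i, segment 𝕜 0 (c i) =
      ⋃ π : Equiv.Perm (Fin (n + 1)),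
        convexHull 𝕜 (Set.range fun j => ∑ i ∈ univ.filter (· ≤ j), c (π i)) :=
  (sum_segment_subset_iUnion_convexHull c hsum).antisymm
    (Set.iUnion_subset (convexHull_range_sum_filter_le_subset_sum_segment c))

end

theorem stmt_14_general (k : ℕ) (hk : 1 ≤ k) (c : Fin k → (Fin (k - 1) → ℝ))
    (hsum : ∑ i, c i = 0) :
    (∑ i : Fin k, segment ℝ (0 : Fin (k - 1) → ℝ) (c i)) =
      ⋃ π : Equiv.Perm (Fin k),
        convexHull ℝ
          (Set.range fun j : Fin k =>
            ∑ i ∈ Finset.univ.filter (· ≤ j), c (π i)) := by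
  obtain ⟨n, rfl⟩ := Nat.exists_eq_add_of_le' hk
  exact sum_segment_eq_iUnion_convexHull c hsum

theorem stmt_14 (k : ℕ) (hk : 1 ≤ k) (c : Fin k → (Fin (k - 1) → ℝ))
    (hspan : Submodule.span ℝ (Set.range c) = ⊤)
    (hsum : ∑ i, c i = 0) :
    (∑ i : Fin k, segment ℝ (0 : Fin (k - 1) → ℝ) (c i)) =
      ⋃ π : Equiv.Perm (Fin k),
        convexHull ℝ
          (Set.range fun j : Fin k =>
            ∑ i ∈ Finset.univ.filter (· ≤ j), c (π i)) :=
  stmt_14_general k hk c hsum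
end

section
/- Let k = 3 and suppose L = (l_1, l_2, l_3) is generic. Then the generalized Tonnetz Tonn^{n,3}(L) has exactly n faces of cardinality 1, exactly 3n faces of cardinality 2, and exactly 2n faces of cardinality 3; in particular its Euler characteristic n − 3n + 2n equals 0. -/
lemma castCases {n p q : ℕ} (hn : 0 < n) (hp : p < 2*n) (hq : q < 2*n)
    (h : (p : ZMod n) = q) : p = q ∨ p = q + n ∨ q = p + n := by
  have hm : p % n = q % n := (ZMod.natCast_eq_natCast_iff p q n).1 h
  have h1 := Nat.mod_add_div p n
  have h2 := Nat.mod_add_div q n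
  have hd1 : p / n < 2 := Nat.div_lt_of_lt_mul (by omega)
  have hd2 : q / n < 2 := Nat.div_lt_of_lt_mul (by omega)
  interval_cases h3 : p / n <;> interval_cases h4 : q / n <;> omega

lemma addCast {n : ℕ} (a b c : ℕ) (h : a + b = c ∨ a + b = c + n) (x : ZMod n) :
    x + (a : ZMod n) + (b : ZMod n) = x + (c : ZMod n) := by
  rw [add_assoc, ← Nat.cast_add]
  congr 1
  rcases h with h | h
  · rw [h]
  · rw [h, Nat.cast_add, ZMod.natCast_self, add_zero]

lemma addCast0 {n : ℕ} (a b : ℕ) (h : a + b = n) (x : ZMod n) :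
    x + (a : ZMod n) + (b : ZMod n) = x := by
  have := addCast a b 0 (Or.inr (by omega)) x
  simpa using this

lemma tonnDelta3 (n : ℕ) (L : Fin 3 → ℕ) (x : ZMod n) (σ : Equiv.Perm (Fin 3)) :
    tonnDelta n 3 L x σ =
      {x, x + (L (σ 0) : ZMod n), x + ((L (σ 0) + L (σ 1) : ℕ) : ZMod n)} := by
  have h0 : (({0,1,2} : Finset (Fin 3)).filter (· < (0 : Fin 3))) = ∅ := by decide
  have h1 : (({0,1,2} : Finset (Fin 3)).filter (· < (1 : Fin 3))) = {0} := by decide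
  have h2 : (({0,1,2} : Finset (Fin 3)).filter (· < (2 : Fin 3))) = {0, 1} := by decide
  have hu : (Finset.univ : Finset (Fin 3)) = {0, 1, 2} := by decide
  rw [tonnDelta, hu]
  rw [Finset.image_insert, Finset.image_insert, Finset.image_singleton, h0, h1, h2]
  simp [Finset.sum_insert, Finset.sum_singleton]

set_option maxHeartbeats 800000 in
theorem stmt_18 (n : ℕ) (hn : 1 ≤ n)
    (L : Fin 3 → ℕ) (hL : ∀ i, 0 < L i) (hsum : ∑ i, L i = n)
    (hgen : TonnGeneric 3 L) :
    Set.ncard {S : Finset (ZMod n) | IsTonnFace n 3 L S ∧ S.card = 1} = n ∧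
    Set.ncard {S : Finset (ZMod n) | IsTonnFace n 3 L S ∧ S.card = 2} = 3 * n ∧
    Set.ncard {S : Finset (ZMod n) | IsTonnFace n 3 L S ∧ S.card = 3} = 2 * n ∧
    (n : ℤ) - 3 * n + 2 * n = 0 := by
  haveI : NeZero n := ⟨by omega⟩
  have hnpos : 0 < n := hn
  have hs : L 0 + L 1 + L 2 = n := by rw [← hsum, Fin.sum_univ_three]
  have hl0 := hL 0
  have hl1 := hL 1
  have hl2 := hL 2
  -- L i < n
  have hlt : ∀ i : Fin 3, L i < n := by
    intro i
    have h1 : L i ≤ n := by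
      rw [← hsum]
      exact Finset.single_le_sum (f := L) (fun j _ => Nat.zero_le _) (Finset.mem_univ i)
    rcases h1.lt_or_eq with h | h
    · exact h
    · exfalso
      have h2 : ({i} : Finset (Fin 3)) = Finset.univ :=
        hgen {i} Finset.univ (by rw [Finset.sum_singleton, hsum, h])
      have h3 := congrArg Finset.card h2
      simp at h3
  have hlt0 := hlt 0
  have hlt1 := hlt 1
  have hlt2 := hlt 2
  -- distinctness facts
  have hd01 : L 0 ≠ L 1 := fun h =>
    absurd (hgen {0} {1} (by simpa using h)) (by decide)
  have hd02 : L 0 ≠ L 2 := fun h =>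
    absurd (hgen {0} {2} (by simpa using h)) (by decide)
  have hd12 : L 1 ≠ L 2 := fun h =>
    absurd (hgen {1} {2} (by simpa using h)) (by decide)
  have h0_12 : L 0 ≠ L 1 + L 2 := fun h =>
    absurd (hgen {0} {1,2} (by rw [Finset.sum_singleton,
      Finset.sum_pair (by decide : (1:Fin 3) ≠ 2)]; exact h)) (by decide)
  have h1_02 : L 1 ≠ L 0 + L 2 := fun h =>
    absurd (hgen {1} {0,2} (by rw [Finset.sum_singleton,
      Finset.sum_pair (by decide : (0:Fin 3) ≠ 2)]; exact h)) (by decide)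
  have h2_01 : L 2 ≠ L 0 + L 1 := fun h =>
    absurd (hgen {2} {0,1} (by rw [Finset.sum_singleton,
      Finset.sum_pair (by decide : (0:Fin 3) ≠ 1)]; exact h)) (by decide)
  have hinj : ∀ i j : Fin 3, L i = L j → i = j := by
    intro i j h
    have := hgen {i} {j} (by simpa using h)
    exact Finset.singleton_injective this
  -- cast tools
  have hcne : ∀ m : ℕ, 0 < m → m < 2*n → m ≠ n → (m : ZMod n) ≠ 0 := by
    intro m h1 h2 h3 h
    rcases castCases (p := m) (q := 0) hnpos h2 (by omega) (by simpa using h) with h|h|h <;> omega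
  have hceq : ∀ p q : ℕ, p < 2*n → q < 2*n → (p : ZMod n) = q →
      p = q ∨ p = q + n ∨ q = p + n := fun p q hp hq h => castCases hnpos hp hq h
  -- self_eq_add_right style: x = x + ↑m → (m:ZMod n) = 0
  have hself : ∀ (x : ZMod n) (m : ℕ), x = x + (m : ZMod n) → (m : ZMod n) = 0 := by
    intro x m h
    have := h.symm
    rwa [add_eq_left] at this
  -- every x lies in a simplex: singletons are faces
  have face1 : ∀ x : ZMod n, IsTonnFace n 3 L {x} := by
    intro x
    refine ⟨Finset.singleton_nonempty x, x, 1, ?_⟩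
    rw [tonnDelta3]
    exact Finset.singleton_subset_iff.2 (Finset.mem_insert_self _ _)
  have e1 : {S : Finset (ZMod n) | IsTonnFace n 3 L S ∧ S.card = 1} =
      ↑(Finset.image (fun x : ZMod n => ({x} : Finset (ZMod n))) Finset.univ) := by
    ext S
    simp only [Set.mem_setOf_eq, Finset.coe_image, Finset.coe_univ, Set.image_univ,
      Set.mem_range]
    constructor
    · rintro ⟨-, hc⟩
      obtain ⟨x, rfl⟩ := Finset.card_eq_one.1 hc
      exact ⟨x, rfl⟩
    · rintro ⟨x, rfl⟩
      exact ⟨face1 x, Finset.card_singleton x⟩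
  have c1 : Set.ncard {S : Finset (ZMod n) | IsTonnFace n 3 L S ∧ S.card = 1} = n := by
    rw [e1, Set.ncard_coe_finset,
      Finset.card_image_of_injective _ (fun a b h => by simpa using h)]
    simp [ZMod.card]
  have hpairsum : ∀ i j : Fin 3, L i + L j ≠ n := by
    intro i j h
    rcases eq_or_ne i j with rfl | hij
    · have hsplit := Finset.sum_add_sum_compl {i} L
      rw [hsum, Finset.sum_singleton] at hsplit
      have h2 : ({i} : Finset (Fin 3)) = {i}ᶜ :=
        hgen {i} {i}ᶜ (by rw [Finset.sum_singleton]; omega)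
      have h3 : i ∈ ({i}ᶜ : Finset (Fin 3)) := h2 ▸ Finset.mem_singleton_self i
      simp at h3
    · have h2 : ({i, j} : Finset (Fin 3)) = Finset.univ :=
        hgen {i, j} Finset.univ (by rw [Finset.sum_pair hij, hsum]; exact h)
      have h3 := congrArg Finset.card h2
      rw [Finset.card_pair hij] at h3
      simp at h3
  -- pairs are faces
  have fpface : ∀ (x : ZMod n) (i : Fin 3),
      IsTonnFace n 3 L {x, x + (L i : ZMod n)} := by
    intro x i
    refine ⟨Finset.insert_nonempty _ _, x, Equiv.swap 0 i, ?_⟩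
    rw [tonnDelta3, Equiv.swap_apply_left]
    intro t ht
    simp only [Finset.mem_insert, Finset.mem_singleton] at ht ⊢
    tauto
  have fpcard : ∀ (x : ZMod n) (i : Fin 3),
      ({x, x + (L i : ZMod n)} : Finset (ZMod n)).card = 2 := by
    intro x i
    have hi := hL i
    have hilt := hlt i
    rw [Finset.card_insert_of_notMem (by
      simp only [Finset.mem_singleton]
      intro h
      exact hcne (L i) hi (by omega) (by omega) (hself x (L i) h)),
      Finset.card_singleton]
  -- every card-2 face is a pair {x, x + L i}
  have pairrep : ∀ S : Finset (ZMod n), IsTonnFace n 3 L S → S.card = 2 →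
      ∃ p : ZMod n × Fin 3, S = {p.1, p.1 + (L p.2 : ZMod n)} := by
    rintro S ⟨-, x, σ, hsub⟩ hc
    obtain ⟨u, v, huv, rfl⟩ := Finset.card_eq_two.1 hc
    rw [tonnDelta3] at hsub
    have h3 : L (σ 0) + L (σ 1) + L (σ 2) = n := by
      have h := Equiv.sum_comp σ L
      rw [Fin.sum_univ_three, hsum] at h
      exact h
    have key0 : x + ((L (σ 0) + L (σ 1) : ℕ) : ZMod n) + (L (σ 2) : ZMod n) = x :=
      addCast0 _ _ h3 x
    have key1 : x + (L (σ 0) : ZMod n) + (L (σ 1) : ZMod n)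
        = x + ((L (σ 0) + L (σ 1) : ℕ) : ZMod n) :=
      addCast _ _ _ (Or.inl rfl) x
    have hu : u = x ∨ u = x + (L (σ 0) : ZMod n)
        ∨ u = x + ((L (σ 0) + L (σ 1) : ℕ) : ZMod n) := by
      have := hsub (Finset.mem_insert_self u {v})
      simpa using this
    have hv : v = x ∨ v = x + (L (σ 0) : ZMod n)
        ∨ v = x + ((L (σ 0) + L (σ 1) : ℕ) : ZMod n) := by
      have := hsub (by simp : v ∈ insert u {v})
      simpa using this
    rcases hu with hu | hu | hu <;> rcases hv with hv | hv | hv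
    · exact absurd (hu.trans hv.symm) huv
    · exact ⟨(u, σ 0), by rw [hu, hv]⟩
    · exact ⟨(v, σ 2), by rw [hu, hv, key0]; exact Finset.pair_comm _ _⟩
    · exact ⟨(v, σ 0), by rw [hu, hv]; exact Finset.pair_comm _ _⟩
    · exact absurd (hu.trans hv.symm) huv
    · exact ⟨(u, σ 1), by rw [hu, hv, key1]⟩
    · exact ⟨(u, σ 2), by rw [hu, hv, key0]⟩
    · exact ⟨(v, σ 1), by rw [hu, hv, key1]; exact Finset.pair_comm _ _⟩
    · exact absurd (hu.trans hv.symm) huv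
  -- injectivity of the pair parametrization
  have pinj : Function.Injective
      (fun p : ZMod n × Fin 3 => ({p.1, p.1 + (L p.2 : ZMod n)} : Finset (ZMod n))) := by
    rintro ⟨x, i⟩ ⟨y, j⟩ h
    simp only at h
    have hi := hL i; have hj := hL j
    have hilt := hlt i; have hjlt := hlt j
    have hij : L i + L j ≠ n := hpairsum i j
    have hy : y = x ∨ y = x + (L i : ZMod n) := by
      have : y ∈ ({x, x + (L i : ZMod n)} : Finset (ZMod n)) :=
        h ▸ Finset.mem_insert_self y _
      simpa using this
    rcases hy with hy | hy
    · have hm : x + (L j : ZMod n) ∈ ({x, x + (L i : ZMod n)} : Finset (ZMod n)) := by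
        rw [h, hy]; simp
      simp only [Finset.mem_insert, Finset.mem_singleton] at hm
      rcases hm with hm | hm
      · exact absurd ((add_eq_left).1 hm)
          (hcne (L j) hj (by omega) (by omega))
      · have h4 : (L j : ZMod n) = (L i : ZMod n) := add_left_cancel hm
        rcases hceq (L j) (L i) (by omega) (by omega) h4 with h5 | h5 | h5
        · exact Prod.ext hy.symm (hinj i j h5.symm)
        · omega
        · omega
    · exfalso
      have hm : x ∈ ({y, y + (L j : ZMod n)} : Finset (ZMod n)) := by
        rw [← h]; simp
      rw [hy] at hm
      simp only [Finset.mem_insert, Finset.mem_singleton] at hm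
      rcases hm with hm | hm
      · exact hcne (L i) hi (by omega) (by omega) (hself x (L i) hm)
      · rw [addCast (L i) (L j) (L i + L j) (Or.inl rfl) x] at hm
        exact hcne (L i + L j) (by omega) (by omega) hij (hself x _ hm)
  have e2 : {S : Finset (ZMod n) | IsTonnFace n 3 L S ∧ S.card = 2} =
      ↑(Finset.image (fun p : ZMod n × Fin 3 =>
        ({p.1, p.1 + (L p.2 : ZMod n)} : Finset (ZMod n))) Finset.univ) := by
    ext S
    simp only [Set.mem_setOf_eq, Finset.coe_image, Finset.coe_univ, Set.image_univ,
      Set.mem_range]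
    constructor
    · rintro ⟨hf, hc⟩
      obtain ⟨p, hp⟩ := pairrep S hf hc
      exact ⟨p, hp.symm⟩
    · rintro ⟨⟨x, i⟩, rfl⟩
      exact ⟨fpface x i, fpcard x i⟩
  have c2 : Set.ncard {S : Finset (ZMod n) | IsTonnFace n 3 L S ∧ S.card = 2} = 3 * n := by
    rw [e2, Set.ncard_coe_finset, Finset.card_image_of_injective _ pinj]
    simp [ZMod.card, mul_comm]
  -- triangle parametrization
  have hmem2 : ∀ w : Fin 2, w = 0 ∨ w = 1 := by decide
  have hmem3 : ∀ m : Fin 3, m = 0 ∨ m = 1 ∨ m = 2 := by decide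
  have hsucc0 : ((0 : Fin 2)).succ = (1 : Fin 3) := rfl
  have hsucc1 : ((1 : Fin 2)).succ = (2 : Fin 3) := rfl
  have haux : ∀ w : Fin 2, 0 < L w.succ ∧ L 0 + L w.succ < n ∧ 2*L 0 + L w.succ ≠ n := by
    intro w
    rcases hmem2 w with rfl | rfl
    · rw [hsucc0]; omega
    · rw [hsucc1]; omega
  have haux2 : ∀ w w' : Fin 2, 2*L 0 + L w.succ + L w'.succ ≠ n := by
    intro w w'
    rcases hmem2 w with rfl | rfl <;> rcases hmem2 w' with rfl | rfl <;>
      simp only [hsucc0, hsucc1] <;> omega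
  have h2L0 : 2*L 0 ≠ n := by omega
  -- key injectivity lemma for triangles
  have keyinj : ∀ (x y : ZMod n) (d e : ℕ), 0 < d → 0 < e → L 0 + d < n → L 0 + e < n →
      2*L 0 + d ≠ n → 2*L 0 + e ≠ n → 2*L 0 + d + e ≠ n →
      ({x, x + (L 0 : ZMod n), x + ((L 0 + d : ℕ) : ZMod n)} : Finset (ZMod n)) =
        {y, y + (L 0 : ZMod n), y + ((L 0 + e : ℕ) : ZMod n)} →
      x = y ∧ d = e := by
    intro x y d e hd he hdn hen h2d h2e h2de h
    have hy : y = x ∨ y = x + (L 0 : ZMod n) ∨ y = x + ((L 0 + d : ℕ) : ZMod n) := by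
      have : y ∈ ({x, x + (L 0 : ZMod n), x + ((L 0 + d : ℕ) : ZMod n)} : Finset (ZMod n)) :=
        h ▸ Finset.mem_insert_self y _
      simpa using this
    rcases hy with hy | hy | hy
    · refine ⟨hy.symm, ?_⟩
      have hm : x + ((L 0 + e : ℕ) : ZMod n) ∈
          ({x, x + (L 0 : ZMod n), x + ((L 0 + d : ℕ) : ZMod n)} : Finset (ZMod n)) := by
        rw [h, hy]; simp
      simp only [Finset.mem_insert, Finset.mem_singleton] at hm
      rcases hm with hm | hm | hm
      · exact absurd (hself x _ hm.symm ▸ hm) (by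
          exact fun _ => hcne (L 0 + e) (by omega) (by omega) (by omega)
            ((add_eq_left).1 hm))
      · have h4 : ((L 0 + e : ℕ) : ZMod n) = ((L 0 : ℕ) : ZMod n) := add_left_cancel hm
        rcases hceq _ _ (by omega) (by omega) h4 with h5 | h5 | h5 <;> omega
      · have h4 : ((L 0 + e : ℕ) : ZMod n) = ((L 0 + d : ℕ) : ZMod n) := add_left_cancel hm
        rcases hceq _ _ (by omega) (by omega) h4 with h5 | h5 | h5 <;> omega
    · exfalso
      have hm : x ∈ ({y, y + (L 0 : ZMod n), y + ((L 0 + e : ℕ) : ZMod n)} : Finset (ZMod n)) := by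
        rw [← h]; simp
      rw [hy, addCast (L 0) (L 0) (2*L 0) (Or.inl (by omega)) x,
        addCast (L 0) (L 0 + e) (2*L 0 + e) (Or.inl (by omega)) x] at hm
      simp only [Finset.mem_insert, Finset.mem_singleton] at hm
      rcases hm with hm | hm | hm
      · exact hcne (L 0) hl0 (by omega) (by omega) (hself x _ hm)
      · exact hcne (2*L 0) (by omega) (by omega) h2L0 (hself x _ hm)
      · exact hcne (2*L 0 + e) (by omega) (by omega) h2e (hself x _ hm)
    · exfalso
      have hm : x ∈ ({y, y + (L 0 : ZMod n), y + ((L 0 + e : ℕ) : ZMod n)} : Finset (ZMod n)) := by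
        rw [← h]; simp
      rw [hy, addCast (L 0 + d) (L 0) (2*L 0 + d) (Or.inl (by omega)) x,
        addCast (L 0 + d) (L 0 + e) (2*L 0 + d + e) (Or.inl (by omega)) x] at hm
      simp only [Finset.mem_insert, Finset.mem_singleton] at hm
      rcases hm with hm | hm | hm
      · exact hcne (L 0 + d) (by omega) (by omega) (by omega) (hself x _ hm)
      · exact hcne (2*L 0 + d) (by omega) (by omega) h2d (hself x _ hm)
      · exact hcne (2*L 0 + d + e) (by omega) (by omega) h2de (hself x _ hm)
  have ginj : Function.Injective
      (fun p : ZMod n × Fin 2 =>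
        ({p.1, p.1 + (L 0 : ZMod n), p.1 + ((L 0 + L p.2.succ : ℕ) : ZMod n)} :
          Finset (ZMod n))) := by
    rintro ⟨x, u⟩ ⟨y, v⟩ h
    simp only at h
    obtain ⟨h1u, h2u, h3u⟩ := haux u
    obtain ⟨h1v, h2v, h3v⟩ := haux v
    obtain ⟨hxy, hde⟩ := keyinj x y (L u.succ) (L v.succ) h1u h1v h2u h2v h3u h3v
      (haux2 u v) h
    exact Prod.ext hxy (Fin.succ_inj.1 (hinj _ _ hde))
  -- each triangle has card 3
  have gcard : ∀ p : ZMod n × Fin 2,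
      ({p.1, p.1 + (L 0 : ZMod n), p.1 + ((L 0 + L p.2.succ : ℕ) : ZMod n)} :
        Finset (ZMod n)).card = 3 := by
    rintro ⟨x, u⟩
    obtain ⟨h1u, h2u, h3u⟩ := haux u
    refine Finset.card_eq_three.2 ⟨x, x + (L 0 : ZMod n),
      x + ((L 0 + L u.succ : ℕ) : ZMod n), ?_, ?_, ?_, rfl⟩
    · intro hm
      exact hcne (L 0) hl0 (by omega) (by omega) (hself x _ hm)
    · intro hm
      exact hcne (L 0 + L u.succ) (by omega) (by omega) (by omega) (hself x _ hm)
    · intro hm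
      have h4 : ((L 0 : ℕ) : ZMod n) = ((L 0 + L u.succ : ℕ) : ZMod n) := add_left_cancel hm
      rcases hceq _ _ (by omega) (by omega) h4 with h5 | h5 | h5 <;> omega
  -- each triangle is a maximal simplex
  have gdelta : ∀ p : ZMod n × Fin 2, ∃ (x : ZMod n) (σ : Equiv.Perm (Fin 3)),
      ({p.1, p.1 + (L 0 : ZMod n), p.1 + ((L 0 + L p.2.succ : ℕ) : ZMod n)} :
        Finset (ZMod n)) = tonnDelta n 3 L x σ := by
    rintro ⟨x, u⟩
    rcases hmem2 u with rfl | rfl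
    · refine ⟨x, 1, ?_⟩
      rw [tonnDelta3, hsucc0]
      rfl
    · refine ⟨x, Equiv.swap 1 2, ?_⟩
      rw [tonnDelta3, hsucc1]
      rw [show ((Equiv.swap (1 : Fin 3) 2) 0) = 0 from by decide,
        show ((Equiv.swap (1 : Fin 3) 2) 1) = 2 from by decide]
  -- every maximal simplex is a triangle
  have deltarep : ∀ (x : ZMod n) (σ : Equiv.Perm (Fin 3)), ∃ p : ZMod n × Fin 2,
      tonnDelta n 3 L x σ =
        ({p.1, p.1 + (L 0 : ZMod n), p.1 + ((L 0 + L p.2.succ : ℕ) : ZMod n)} :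
          Finset (ZMod n)) := by
    intro x σ
    have h01 : σ 0 ≠ σ 1 := fun hq => absurd (σ.injective hq) (by decide)
    rw [tonnDelta3]
    rcases hmem3 (σ 0) with hA | hA | hA <;> rcases hmem3 (σ 1) with hB | hB | hB
    · exact absurd (hA.trans hB.symm) h01
    · -- (0,1)
      refine ⟨(x, 0), ?_⟩
      rw [hA, hB, hsucc0]
    · -- (0,2)
      refine ⟨(x, 1), ?_⟩
      rw [hA, hB, hsucc1]
    · -- (1,0)
      refine ⟨(x + ((L 1 : ℕ) : ZMod n), 1), ?_⟩
      simp only [hsucc1]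
      rw [hA, hB, addCast (L 1) (L 0) (L 1 + L 0) (Or.inl rfl) x,
        addCast0 (L 1) (L 0 + L 2) (by omega) x]
      ext t
      simp only [Finset.mem_insert, Finset.mem_singleton]
      tauto
    · exact absurd (hA.trans hB.symm) h01
    · -- (1,2)
      refine ⟨(x + ((L 1 + L 2 : ℕ) : ZMod n), 0), ?_⟩
      simp only [hsucc0]
      rw [hA, hB, addCast0 (L 1 + L 2) (L 0) (by omega) x,
        addCast (L 1 + L 2) (L 0 + L 1) (L 1) (Or.inr (by omega)) x]
      ext t
      simp only [Finset.mem_insert, Finset.mem_singleton]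
      tauto
    · -- (2,0)
      refine ⟨(x + ((L 2 : ℕ) : ZMod n), 0), ?_⟩
      simp only [hsucc0]
      rw [hA, hB, addCast (L 2) (L 0) (L 2 + L 0) (Or.inl rfl) x,
        addCast0 (L 2) (L 0 + L 1) (by omega) x]
      ext t
      simp only [Finset.mem_insert, Finset.mem_singleton]
      tauto
    · -- (2,1)
      refine ⟨(x + ((L 2 + L 1 : ℕ) : ZMod n), 1), ?_⟩
      simp only [hsucc1]
      rw [hA, hB, addCast0 (L 2 + L 1) (L 0) (by omega) x,
        addCast (L 2 + L 1) (L 0 + L 2) (L 2) (Or.inr (by omega)) x]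
      ext t
      simp only [Finset.mem_insert, Finset.mem_singleton]
      tauto
    · exact absurd (hA.trans hB.symm) h01
  have e3 : {S : Finset (ZMod n) | IsTonnFace n 3 L S ∧ S.card = 3} =
      ↑(Finset.image (fun p : ZMod n × Fin 2 =>
        ({p.1, p.1 + (L 0 : ZMod n), p.1 + ((L 0 + L p.2.succ : ℕ) : ZMod n)} :
          Finset (ZMod n))) Finset.univ) := by
    ext S
    simp only [Set.mem_setOf_eq, Finset.coe_image, Finset.coe_univ, Set.image_univ,
      Set.mem_range]
    constructor
    · rintro ⟨⟨-, x, σ, hsub⟩, hc⟩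
      obtain ⟨p, hp⟩ := deltarep x σ
      rw [hp] at hsub
      refine ⟨p, ?_⟩
      exact (Finset.eq_of_subset_of_card_le hsub (by rw [gcard p, hc])).symm
    · rintro ⟨p, rfl⟩
      obtain ⟨y, σ, hy⟩ := gdelta p
      exact ⟨⟨Finset.insert_nonempty _ _, y, σ, hy.le⟩, gcard p⟩
  have c3 : Set.ncard {S : Finset (ZMod n) | IsTonnFace n 3 L S ∧ S.card = 3} = 2 * n := by
    rw [e3, Set.ncard_coe_finset, Finset.card_image_of_injective _ ginj]
    simp [ZMod.card, mul_comm]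
  exact ⟨c1, c2, c3, by ring⟩
end
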